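/- arXiv:2504.21419 — 9 statements merged into one kernel-verified Lean document; each statement's English description precedes it below -/
import Mathlib

section
/- Let H and E be real Hilbert spaces, J : H → E a bounded linear operator with adjoint J*, and let g₀ ∈ E lie in the closure of the range of J. For each λ > 0 let h_λ ∈ H be the unique solution of (J* J + λ·id) h_λ = J* g₀. Then ‖g₀ − J h_λ‖_E → 0 as λ → 0⁺. -/
open Filter Topology

lemma reg_energy_bound
    {H E : Type*} [NormedAddCommGroup H] [InnerProductSpace ℝ H] [CompleteSpace H]
    [NormedAddCommGroup E] [InnerProductSpace ℝ E] [CompleteSpace E]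
    (J : H →L[ℝ] E) (g₀ : E) (lam : ℝ) (hl : 0 < lam) (v h : H)
    (hv : (ContinuousLinearMap.adjoint J) (J v) + lam • v
        = (ContinuousLinearMap.adjoint J) g₀) :
    ‖g₀ - J v‖ ^ 2 ≤ ‖g₀ - J h‖ ^ 2 + lam * ‖h‖ ^ 2 := by
  set d := h - v with hd
  have key : (inner ℝ (J v) (J d) : ℝ) + lam * inner ℝ v d = inner ℝ g₀ (J d) := by
    have := congrArg (fun x => (inner ℝ x d : ℝ)) hv
    simpa [inner_add_left, real_inner_smul_left,
      ContinuousLinearMap.adjoint_inner_left] using this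
  have hhd : h = v + d := by simp [hd]
  have hJh : J h = J v + J d := by rw [hhd]; simp
  have e1 : ‖g₀ - J h‖ ^ 2
      = ‖g₀ - J v‖ ^ 2 - 2 * inner ℝ (g₀ - J v) (J d) + ‖J d‖ ^ 2 := by
    have : g₀ - J h = (g₀ - J v) - J d := by rw [hJh]; abel
    rw [this, @norm_sub_sq_real]
  have e2 : ‖h‖ ^ 2 = ‖v‖ ^ 2 + 2 * inner ℝ v d + ‖d‖ ^ 2 := by
    rw [hhd, @norm_add_sq_real]
  have e3 : (inner ℝ (g₀ - J v) (J d) : ℝ) = inner ℝ g₀ (J d) - inner ℝ (J v) (J d) :=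
    inner_sub_left _ _ _
  nlinarith [sq_nonneg ‖J d‖, sq_nonneg ‖d‖, sq_nonneg ‖v‖, hl.le,
    mul_nonneg hl.le (sq_nonneg ‖d‖), mul_nonneg hl.le (sq_nonneg ‖v‖)]

/-- Let `J : H → E` be a bounded linear operator between real Hilbert
spaces and `g₀ ∈ closure (range J)`.  If for each `λ > 0`, `h_λ` solves
`(J* J + λ·id) h_λ = J* g₀`, then `‖g₀ − J h_λ‖ → 0` as `λ → 0⁺`. -/
theorem regularization_error_tendsto_zero
    {H E : Type*} [NormedAddCommGroup H] [InnerProductSpace ℝ H] [CompleteSpace H]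
    [NormedAddCommGroup E] [InnerProductSpace ℝ E] [CompleteSpace E]
    (J : H →L[ℝ] E) (g₀ : E) (hg₀ : g₀ ∈ closure (Set.range J))
    (hlam : ℝ → H)
    (hsol : ∀ lam : ℝ, 0 < lam →
      (ContinuousLinearMap.adjoint J) (J (hlam lam)) + lam • hlam lam
        = (ContinuousLinearMap.adjoint J) g₀) :
    Tendsto (fun lam : ℝ => ‖g₀ - J (hlam lam)‖) (nhdsWithin 0 (Set.Ioi 0)) (nhds 0) := by
  rw [Metric.tendsto_nhdsWithin_nhds]
  intro ε hε
  -- pick h in the range with ‖g₀ - J h‖ < ε/2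
  obtain ⟨y, hy, hdy⟩ := Metric.mem_closure_iff.1 hg₀ (ε / 2) (by positivity)
  obtain ⟨h, rfl⟩ := hy
  have hdy' : ‖g₀ - J h‖ < ε / 2 := by rwa [dist_eq_norm] at hdy
  refine ⟨(ε / 2) ^ 2 / (‖h‖ ^ 2 + 1), by positivity, ?_⟩
  intro lam hlamI hdist
  have hl : 0 < lam := hlamI
  have hdist' : lam < (ε / 2) ^ 2 / (‖h‖ ^ 2 + 1) := by
    rwa [Real.dist_eq, sub_zero, abs_of_pos hl] at hdist
  have hb := reg_energy_bound J g₀ lam hl (hlam lam) h (hsol lam hl)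
  have h1 : lam * ‖h‖ ^ 2 < (ε / 2) ^ 2 := by
    have hpos : (0:ℝ) < ‖h‖ ^ 2 + 1 := by positivity
    calc lam * ‖h‖ ^ 2 ≤ lam * (‖h‖ ^ 2 + 1) := by nlinarith
      _ < (ε / 2) ^ 2 / (‖h‖ ^ 2 + 1) * (‖h‖ ^ 2 + 1) := by
          exact mul_lt_mul_of_pos_right hdist' hpos
      _ = (ε / 2) ^ 2 := div_mul_cancel₀ _ hpos.ne'
  have h2 : ‖g₀ - J (hlam lam)‖ ^ 2 < ε ^ 2 := by
    nlinarith [norm_nonneg (g₀ - J h), hdy', hε]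
  have h3 : ‖g₀ - J (hlam lam)‖ < ε := by
    nlinarith [norm_nonneg (g₀ - J (hlam lam))]
  rw [Real.dist_eq]
  simpa [abs_of_nonneg (norm_nonneg _)] using h3
end

section
/- Let H and E be real Hilbert spaces, J : H → E a bounded linear operator with adjoint J*, and h₀ ∈ H. For λ > 0 let h_λ ∈ H be the unique solution of (J* J + λ·id) h_λ = J* J h₀. Then ‖h_λ‖_H ≤ ‖h₀‖_H, and the regularization error satisfies the rate ‖J h₀ − J h_λ‖_E ≤ 2^{-1/2} · ‖h₀‖_H · λ^{1/2}. -/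
open scoped RealInnerProductSpace


/-- Let `J : H → E` be a bounded linear operator between real Hilbert
spaces and `h₀ ∈ H`.  For `λ > 0`, if `h_λ` solves `(J* J + λ·id) h_λ = J* J h₀`, then
`‖h_λ‖ ≤ ‖h₀‖` and `‖J h₀ − J h_λ‖ ≤ 2^{-1/2} ‖h₀‖ λ^{1/2}`. -/
theorem regularization_error_rate
    {H E : Type*} [NormedAddCommGroup H] [InnerProductSpace ℝ H] [CompleteSpace H]
    [NormedAddCommGroup E] [InnerProductSpace ℝ E] [CompleteSpace E]
    (J : H →L[ℝ] E) (h₀ : H) (lam : ℝ) (hlam : 0 < lam) (hl : H)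
    (hsol : (ContinuousLinearMap.adjoint J) (J hl) + lam • hl
        = (ContinuousLinearMap.adjoint J) (J h₀)) :
    ‖hl‖ ≤ ‖h₀‖ ∧
    ‖J h₀ - J hl‖ ≤ (2 : ℝ) ^ (-(1/2 : ℝ)) * ‖h₀‖ * lam ^ ((1/2 : ℝ)) := by
  have key : (ContinuousLinearMap.adjoint J) (J (h₀ - hl)) = lam • hl := by
    rw [map_sub, map_sub, ← hsol]; abel
  -- ‖J (h₀ - hl)‖² = lam * ⟪hl, h₀ - hl⟫
  have h1 : ‖J (h₀ - hl)‖ ^ 2 = lam * (inner ℝ hl (h₀ - hl) : ℝ) := by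
    rw [← real_inner_self_eq_norm_sq, ← ContinuousLinearMap.adjoint_inner_left, key,
      real_inner_smul_left]
  have h2 : 0 ≤ (inner ℝ hl (h₀ - hl) : ℝ) := by
    nlinarith [sq_nonneg ‖J (h₀ - hl)‖]
  have h3 : (inner ℝ hl (h₀ - hl) : ℝ) = (inner ℝ hl h₀ : ℝ) - ‖hl‖ ^ 2 := by
    rw [inner_sub_right, real_inner_self_eq_norm_sq]
  have h4 : (inner ℝ hl h₀ : ℝ) ≤ ‖hl‖ * ‖h₀‖ := real_inner_le_norm hl h₀
  constructor
  · nlinarith [norm_nonneg hl, norm_nonneg h₀]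
  · have hb : ‖J (h₀ - hl)‖ ^ 2 ≤ lam * (‖h₀‖ ^ 2 / 2) := by
      nlinarith [sq_nonneg (‖hl‖ - ‖h₀‖), norm_nonneg hl, norm_nonneg h₀]
    have hrw : (2 : ℝ) ^ (-(1/2 : ℝ)) * ‖h₀‖ * lam ^ ((1/2 : ℝ))
        = Real.sqrt (lam * (‖h₀‖ ^ 2 / 2)) := by
      rw [Real.rpow_neg (by norm_num : (0:ℝ) ≤ 2), ← Real.sqrt_eq_rpow,
        ← Real.sqrt_eq_rpow, Real.sqrt_mul hlam.le,
        Real.sqrt_div (sq_nonneg ‖h₀‖), Real.sqrt_sq (norm_nonneg h₀)]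
      ring
    rw [hrw]
    rw [show J h₀ - J hl = J (h₀ - hl) by rw [map_sub]]
    exact (Real.le_sqrt (norm_nonneg _) (by positivity)).mpr hb
end

section
/- Let H and E be real Hilbert spaces, J : H → E a bounded linear operator with adjoint J*, and let h₀ ∈ H be orthogonal to the kernel of J. For λ > 0 let h_λ ∈ H be the unique solution of (J* J + λ·id) h_λ = J* J h₀. Then ‖h_λ − h₀‖_H → 0 as λ → 0⁺. -/
set_option maxHeartbeats 1000000


open Filter Topology

/-- Let `J : H → E` be a bounded linear operator between real Hilbert
spaces and `h₀ ⊥ ker J`.  If for each `λ > 0`, `h_λ` solves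
`(J* J + λ·id) h_λ = J* J h₀`, then `‖h_λ − h₀‖ → 0` as `λ → 0⁺`. -/
theorem regularized_solution_tendsto
    {H E : Type*} [NormedAddCommGroup H] [InnerProductSpace ℝ H] [CompleteSpace H]
    [NormedAddCommGroup E] [InnerProductSpace ℝ E] [CompleteSpace E]
    (J : H →L[ℝ] E) (h₀ : H) (hh₀ : h₀ ∈ (LinearMap.ker (J : H →ₗ[ℝ] E))ᗮ)
    (hlam : ℝ → H)
    (hsol : ∀ lam : ℝ, 0 < lam →
      (ContinuousLinearMap.adjoint J) (J (hlam lam)) + lam • hlam lam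
        = (ContinuousLinearMap.adjoint J) (J h₀)) :
    Tendsto (fun lam : ℝ => hlam lam) (nhdsWithin 0 (Set.Ioi 0)) (nhds h₀) := by
  set Jd := ContinuousLinearMap.adjoint J with hJd
  set R : Submodule ℝ H := LinearMap.range (Jd : E →L[ℝ] H).toLinearMap with hR
  -- ker J = (range J†)ᗮ
  have hker : (LinearMap.ker (J : H →ₗ[ℝ] E) : Submodule ℝ H) = Rᗮ := by
    ext x
    constructor
    · intro hx u hu
      obtain ⟨e, rfl⟩ := hu
      have hx' : J x = 0 := hx
      simp only [ContinuousLinearMap.coe_coe]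
      rw [hJd, ContinuousLinearMap.adjoint_inner_left, hx', inner_zero_right]
    · intro hx
      have h1 : (inner ℝ (Jd (J x)) x : ℝ) = 0 := hx _ ⟨J x, rfl⟩
      rw [hJd, ContinuousLinearMap.adjoint_inner_left, real_inner_self_eq_norm_sq] at h1
      have : ‖J x‖ = 0 := by nlinarith [norm_nonneg (J x)]
      exact norm_eq_zero.mp this
  -- h₀ is in the closure of the range of J†
  have hcl : h₀ ∈ closure (R : Set H) := by
    have h2 : h₀ ∈ R.topologicalClosure := by
      rw [← R.orthogonal_orthogonal_eq_closure, ← hker]; exact hh₀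
    rwa [← Submodule.topologicalClosure_coe]
  rw [Metric.tendsto_nhdsWithin_nhds]
  intro ε hε
  obtain ⟨y, hy, hyd⟩ := Metric.mem_closure_iff.1 hcl (ε / 2) (by positivity)
  obtain ⟨e, rfl⟩ := hy
  refine ⟨ε ^ 2 / (2 * (‖e‖ ^ 2 + 1)), by positivity, ?_⟩
  intro lam hlampos hlamδ
  set u := hlam lam with hu
  set w := h₀ - u with hw
  set r := h₀ - Jd e with hr
  have hlam0 : (0 : ℝ) < lam := hlampos
  -- key equation: Jd (J w) + lam • w = lam • h₀
  have heq : Jd (J w) + lam • w = lam • h₀ := by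
    have := hsol lam hlam0
    have hJw : Jd (J w) = Jd (J h₀) - Jd (J u) := by
      simp [hw, map_sub]
    rw [hJw, ← this]
    simp only [hw, smul_sub]
    abel
  -- take inner product with w
  have hinner : ‖J w‖ ^ 2 + lam * ‖w‖ ^ 2
      = lam * ((inner ℝ r w : ℝ) + (inner ℝ e (J w) : ℝ)) := by
    have h3 : (inner ℝ (Jd (J w) + lam • w) w : ℝ) = (inner ℝ ((lam : ℝ) • h₀) w : ℝ) := by
      rw [heq]
    rw [inner_add_left, real_inner_smul_left, real_inner_smul_left,
      hJd, ContinuousLinearMap.adjoint_inner_left] at h3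
    have h4 : h₀ = r + Jd e := by rw [hr]; abel
    rw [real_inner_self_eq_norm_sq] at h3
    have h5 : (inner ℝ h₀ w : ℝ) = (inner ℝ r w : ℝ) + (inner ℝ e (J w) : ℝ) := by
      rw [h4, inner_add_left, hJd, ContinuousLinearMap.adjoint_inner_left]
    have h6 : (inner ℝ w w : ℝ) = ‖w‖ ^ 2 := real_inner_self_eq_norm_sq w
    rw [h5, h6, mul_add] at h3
    linarith
  -- estimates
  have hrw : (inner ℝ r w : ℝ) ≤ ‖r‖ * ‖w‖ := real_inner_le_norm r w
  have hew : (inner ℝ e (J w) : ℝ) ≤ ‖e‖ * ‖J w‖ := real_inner_le_norm e (J w)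
  have hrε : ‖r‖ < ε / 2 := by
    rw [hr, ← dist_eq_norm]
    exact hyd
  have hbound : ‖w‖ ^ 2 ≤ lam * ‖e‖ ^ 2 / 2 + ‖r‖ ^ 2 := by
    nlinarith [sq_nonneg (‖J w‖ - lam * ‖e‖ / 2), mul_nonneg hlam0.le (sq_nonneg (‖w‖ - ‖r‖)), hinner, hrw, hew, hlam0, norm_nonneg (J w), norm_nonneg w]
  have hlamb : lam * ‖e‖ ^ 2 / 2 < ε ^ 2 / 4 := by
    have hl : lam < ε ^ 2 / (2 * (‖e‖ ^ 2 + 1)) := by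
      rwa [Real.dist_eq, sub_zero, abs_of_pos hlam0] at hlamδ
    have hl2 : lam * (2 * (‖e‖ ^ 2 + 1)) < ε ^ 2 := (lt_div_iff₀ (by positivity)).1 hl
    have hl3 : lam * (2 * (‖e‖ ^ 2 + 1)) = 2 * (lam * ‖e‖ ^ 2) + 2 * lam := by ring
    linarith [hl3 ▸ hl2]
  have hwε : ‖w‖ < ε := by
    nlinarith [norm_nonneg w, sq_nonneg ‖r‖, hrε, norm_nonneg r]
  rw [dist_eq_norm]
  rw [hw] at hwε
  simpa [norm_sub_rev] using hwε
end

section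
/- In the KDM sampling setup, for every fixed λ > 0 the sample estimator is asymptotically consistent: for 𝐏-almost every ω ∈ Ω, ĥ_{λ,n}(ω) → h_λ in the norm of H as n → ∞. -/
open MeasureTheory

/-- Auxiliary deterministic inequality: if `a • (∑ ⟪v i, e⟫ • v i) + lam • e = r` with
`a ≥ 0` and `lam > 0`, then `‖e‖ ≤ lam⁻¹ * ‖r‖`. -/
private lemma kdm_ineq {H : Type*} [NormedAddCommGroup H] [InnerProductSpace ℝ H]
    (n : ℕ) (v : ℕ → H) (e r : H) (a lam : ℝ) (ha : 0 ≤ a) (hlam : 0 < lam)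
    (heq : a • (∑ i ∈ Finset.range n, (inner ℝ (v i) e : ℝ) • v i) + lam • e = r) :
    ‖e‖ ≤ lam⁻¹ * ‖r‖ := by
  have hpos : 0 ≤ a * (inner ℝ (∑ i ∈ Finset.range n, (inner ℝ (v i) e : ℝ) • v i) e : ℝ) := by
    rw [sum_inner]
    refine mul_nonneg ha (Finset.sum_nonneg fun i _ => ?_)
    rw [real_inner_smul_left]
    exact mul_self_nonneg _
  have h1 : lam * ‖e‖ ^ 2 ≤ (inner ℝ r e : ℝ) := by
    rw [← heq, inner_add_left, real_inner_smul_left, real_inner_smul_left,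
      real_inner_self_eq_norm_sq]
    linarith
  have h2 : (inner ℝ r e : ℝ) ≤ ‖r‖ * ‖e‖ := real_inner_le_norm r e
  rcases eq_or_lt_of_le (norm_nonneg e) with h0 | h0
  · rw [← h0]
    positivity
  · have h3 : lam * ‖e‖ ≤ ‖r‖ := by nlinarith
    rw [le_inv_mul_iff₀ hlam]
    exact h3

private def kdmF1 {Z : Type*} {H : Type*} [NormedAddCommGroup H] [InnerProductSpace ℝ H]
    (φ : Z → H) (p : Z → ℝ) : Z × Z → H := fun z => φ z.2 - p z.1 • φ z.1

private def kdmF2 {Z : Type*} {H : Type*} [NormedAddCommGroup H] [InnerProductSpace ℝ H]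
    (φ : Z → H) (hl : H) : Z × Z → H := fun z => (inner ℝ (φ z.1) hl : ℝ) • φ z.1

private lemma kdm_integrable_of_bound {α E : Type*} [MeasurableSpace α] {μ : Measure α}
    [IsFiniteMeasure μ] [NormedAddCommGroup E] {f : α → E}
    (hm : AEStronglyMeasurable f μ) (C : ℝ) (hC : ∀ a, ‖f a‖ ≤ C) : Integrable f μ :=
  Integrable.mono' (integrable_const C) hm (Filter.Eventually.of_forall hC)

/-- (KDM asymptotic consistency.)  In the KDM sampling setup — i.i.d.
pairs `W i = (z_{P,i}, z_{Q,i})` with distribution `P ⊗ Q`, empirical covariance operator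
`T̂_n` and empirical vector `b̂_n`, and sample estimator `ĥ_{λ,n}` solving
`(T̂_n + λ·id) ĥ_{λ,n} = b̂_n` — for every fixed `λ > 0`, `Prob`-almost surely
`ĥ_{λ,n} → h_λ` in `H` as `n → ∞`, where `h_λ` solves `(T + λ·id) h_λ = b`. -/
theorem kdm_asymptotic_consistency
    {Z : Type*} [MeasurableSpace Z]
    (P Q : Measure Z) [IsProbabilityMeasure P] [IsProbabilityMeasure Q]
    (hQP : Q ≪ P)
    (hg2 : Integrable (fun z => ((Q.rnDeriv P z).toReal) ^ 2) P)
    {H : Type*} [NormedAddCommGroup H] [InnerProductSpace ℝ H] [CompleteSpace H]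
    [TopologicalSpace.SeparableSpace H]
    (φ : Z → H) (hφ : StronglyMeasurable φ)
    (κ : ℝ) (hκ : ∀ z, (inner ℝ (φ z) (φ z) : ℝ) ≤ κ)
    (p : Z → ℝ) (hp : Measurable p) (πB : ℝ) (hpB : ∀ z, |p z| ≤ πB)
    (T : H →L[ℝ] H) (hT : ∀ h : H, T h = ∫ z, (inner ℝ (φ z) h : ℝ) • φ z ∂P)
    (b : H) (hb : b = (∫ z, φ z ∂Q) - ∫ z, p z • φ z ∂P)
    (lam : ℝ) (hlam : 0 < lam)
    (hl : H) (hhl : T hl + lam • hl = b)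
    -- sampling setup: i.i.d. samples of P ⊗ Q
    {Ω : Type*} [MeasurableSpace Ω] (Prob : Measure Ω) [IsProbabilityMeasure Prob]
    (W : ℕ → Ω → Z × Z) (hWmeas : ∀ i, Measurable (W i))
    (hindep : ProbabilityTheory.iIndepFun W Prob)
    (hdist : ∀ i, Measure.map (W i) Prob = P.prod Q)
    -- the sample estimator
    (hhat : ℕ → Ω → H)
    (hhat_eq : ∀ n : ℕ, 1 ≤ n → ∀ ω : Ω,
      (n : ℝ)⁻¹ • (∑ i ∈ Finset.range n,
          (inner ℝ (φ (W i ω).1) (hhat n ω) : ℝ) • φ (W i ω).1)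
        + lam • hhat n ω
      = (n : ℝ)⁻¹ • ∑ i ∈ Finset.range n,
          (φ (W i ω).2 - p (W i ω).1 • φ (W i ω).1)) :
    ∀ᵐ ω ∂Prob, Filter.Tendsto (fun n => hhat n ω) Filter.atTop (nhds hl) := by
  classical
  borelize H
  -- norm bound on the feature map
  have hφnorm : ∀ z, ‖φ z‖ ≤ Real.sqrt κ := by
    intro z
    have h1 : ‖φ z‖ ^ 2 ≤ κ := by
      have := hκ z
      rwa [real_inner_self_eq_norm_sq] at this
    calc ‖φ z‖ = Real.sqrt (‖φ z‖ ^ 2) := (Real.sqrt_sq (norm_nonneg _)).symm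
      _ ≤ Real.sqrt κ := Real.sqrt_le_sqrt h1
  -- the two function views
  set f1 : Z × Z → H := kdmF1 φ p with hf1def
  set f2 : Z × Z → H := kdmF2 φ hl with hf2def
  have hf1sm : StronglyMeasurable f1 :=
    (hφ.comp_measurable measurable_snd).sub
      (((hp.comp measurable_fst).stronglyMeasurable).smul (hφ.comp_measurable measurable_fst))
  have hf2sm : StronglyMeasurable f2 :=
    ((hφ.comp_measurable measurable_fst).inner stronglyMeasurable_const).smul
      (hφ.comp_measurable measurable_fst)
  have hf1m : Measurable f1 := hf1sm.measurable
  have hf2m : Measurable f2 := hf2sm.measurable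
  -- bounds
  have hf1bd : ∀ z : Z × Z, ‖f1 z‖ ≤ Real.sqrt κ + πB * Real.sqrt κ := by
    intro z
    have hπB : (0 : ℝ) ≤ πB := le_trans (abs_nonneg _) (hpB z.1)
    calc ‖f1 z‖ ≤ ‖φ z.2‖ + ‖p z.1 • φ z.1‖ := norm_sub_le _ _
      _ ≤ Real.sqrt κ + πB * Real.sqrt κ := by
          rw [norm_smul, Real.norm_eq_abs]
          exact add_le_add (hφnorm _)
            (mul_le_mul (hpB _) (hφnorm _) (norm_nonneg _) hπB)
  have hf2bd : ∀ z : Z × Z, ‖f2 z‖ ≤ Real.sqrt κ * ‖hl‖ * Real.sqrt κ := by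
    intro z
    calc ‖f2 z‖ = |(inner ℝ (φ z.1) hl : ℝ)| * ‖φ z.1‖ := by
          rw [show f2 z = (inner ℝ (φ z.1) hl : ℝ) • φ z.1 from rfl, norm_smul, Real.norm_eq_abs]
      _ ≤ (‖φ z.1‖ * ‖hl‖) * ‖φ z.1‖ := by
          exact mul_le_mul_of_nonneg_right (abs_real_inner_le_norm _ _) (norm_nonneg _)
      _ ≤ Real.sqrt κ * ‖hl‖ * Real.sqrt κ := by
          have h1 := hφnorm z.1
          have h2 : (0:ℝ) ≤ ‖φ z.1‖ := norm_nonneg _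
          have h3 : (0:ℝ) ≤ ‖hl‖ := norm_nonneg _
          have h4 : (0:ℝ) ≤ Real.sqrt κ := Real.sqrt_nonneg κ
          exact mul_le_mul (mul_le_mul_of_nonneg_right h1 h3) h1 h2 (mul_nonneg h4 h3)
  -- identical distribution of the samples
  have hWid : ∀ i, ProbabilityTheory.IdentDistrib (W i) (W 0) Prob Prob := fun i =>
    ⟨(hWmeas i).aemeasurable, (hWmeas 0).aemeasurable, by rw [hdist i, hdist 0]⟩
  -- means
  have hmean1 : (∫ ω, f1 (W 0 ω) ∂Prob) = b := by
    have e0 : (∫ ω, f1 (W 0 ω) ∂Prob) = ∫ z, f1 z ∂(P.prod Q) := by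
      rw [← hdist 0]
      exact (integral_map (hWmeas 0).aemeasurable hf1sm.aestronglyMeasurable).symm
    have i1 : Integrable (fun z : Z × Z => φ z.2) (P.prod Q) :=
      kdm_integrable_of_bound (hφ.comp_measurable measurable_snd).aestronglyMeasurable
        (Real.sqrt κ) (fun a => hφnorm a.2)
    have i2 : Integrable (fun z : Z × Z => p z.1 • φ z.1) (P.prod Q) := by
      refine kdm_integrable_of_bound
        (((hp.comp measurable_fst).stronglyMeasurable).smul
          (hφ.comp_measurable measurable_fst)).aestronglyMeasurable (πB * Real.sqrt κ) ?_
      intro a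
      have hπB : (0 : ℝ) ≤ πB := le_trans (abs_nonneg _) (hpB a.1)
      rw [norm_smul, Real.norm_eq_abs]
      exact mul_le_mul (hpB _) (hφnorm _) (norm_nonneg _) hπB
    have e1 : (∫ z, f1 z ∂(P.prod Q))
        = (∫ z : Z × Z, φ z.2 ∂(P.prod Q)) - ∫ z : Z × Z, p z.1 • φ z.1 ∂(P.prod Q) :=
      integral_sub i1 i2
    have e2 : (∫ z : Z × Z, φ z.2 ∂(P.prod Q)) = ∫ z, φ z ∂Q := by
      rw [show (∫ z : Z × Z, φ z.2 ∂(P.prod Q))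
          = ∫ z, φ z ∂(Measure.map Prod.snd (P.prod Q)) from
        (integral_map measurable_snd.aemeasurable hφ.aestronglyMeasurable).symm,
        Measure.map_snd_prod]
      simp
    have e3 : (∫ z : Z × Z, p z.1 • φ z.1 ∂(P.prod Q)) = ∫ z, p z • φ z ∂P := by
      rw [show (∫ z : Z × Z, p z.1 • φ z.1 ∂(P.prod Q))
          = ∫ z, p z • φ z ∂(Measure.map Prod.fst (P.prod Q)) from
        (integral_map measurable_fst.aemeasurable
          ((hp.stronglyMeasurable).smul hφ).aestronglyMeasurable).symm,
        Measure.map_fst_prod]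
      simp
    rw [e0, e1, e2, e3, hb]
  have hmean2 : (∫ ω, f2 (W 0 ω) ∂Prob) = T hl := by
    have e0 : (∫ ω, f2 (W 0 ω) ∂Prob) = ∫ z, f2 z ∂(P.prod Q) := by
      rw [← hdist 0]
      exact (integral_map (hWmeas 0).aemeasurable hf2sm.aestronglyMeasurable).symm
    have e1 : (∫ z, f2 z ∂(P.prod Q)) = ∫ z, (inner ℝ (φ z) hl : ℝ) • φ z ∂P := by
      rw [show (∫ z, f2 z ∂(P.prod Q))
          = ∫ z, (inner ℝ (φ z) hl : ℝ) • φ z ∂(Measure.map Prod.fst (P.prod Q)) from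
        (integral_map measurable_fst.aemeasurable
          ((hφ.inner stronglyMeasurable_const).smul hφ).aestronglyMeasurable).symm,
        Measure.map_fst_prod]
      simp
    rw [e0, e1, ← hT hl]
  -- integrability
  have hint1 : Integrable (fun ω => f1 (W 0 ω)) Prob :=
    kdm_integrable_of_bound (hf1sm.comp_measurable (hWmeas 0)).aestronglyMeasurable
      (Real.sqrt κ + πB * Real.sqrt κ) (fun ω => hf1bd _)
  have hint2 : Integrable (fun ω => f2 (W 0 ω)) Prob :=
    kdm_integrable_of_bound (hf2sm.comp_measurable (hWmeas 0)).aestronglyMeasurable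
      (Real.sqrt κ * ‖hl‖ * Real.sqrt κ) (fun ω => hf2bd _)
  -- strong laws of large numbers
  have slln1 := ProbabilityTheory.strong_law_ae (μ := Prob) (fun i ω => f1 (W i ω)) hint1
    (fun i j hij => (hindep.comp (fun _ => f1) (fun _ => hf1m)).indepFun hij)
    (fun i => (hWid i).comp hf1m)
  have slln2 := ProbabilityTheory.strong_law_ae (μ := Prob) (fun i ω => f2 (W i ω)) hint2
    (fun i j hij => (hindep.comp (fun _ => f2) (fun _ => hf2m)).indepFun hij)
    (fun i => (hWid i).comp hf2m)
  rw [hmean1] at slln1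
  rw [hmean2] at slln2
  filter_upwards [slln1, slln2] with ω h1 h2
  rw [tendsto_iff_norm_sub_tendsto_zero]
  set u : ℕ → H := fun n => (n : ℝ)⁻¹ • ∑ i ∈ Finset.range n, f1 (W i ω) with hu
  set v : ℕ → H := fun n => (n : ℝ)⁻¹ • ∑ i ∈ Finset.range n, f2 (W i ω) with hv
  have hg0 : Filter.Tendsto (fun n => lam⁻¹ * (‖u n - b‖ + ‖v n - T hl‖))
      Filter.atTop (nhds 0) := by
    have t1 : Filter.Tendsto (fun n => ‖u n - b‖) Filter.atTop (nhds 0) :=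
      tendsto_iff_norm_sub_tendsto_zero.mp h1
    have t2 : Filter.Tendsto (fun n => ‖v n - T hl‖) Filter.atTop (nhds 0) :=
      tendsto_iff_norm_sub_tendsto_zero.mp h2
    have := (t1.add t2).const_mul lam⁻¹
    simpa using this
  refine squeeze_zero' (Filter.Eventually.of_forall fun n => norm_nonneg _) ?_ hg0
  filter_upwards [Filter.eventually_ge_atTop 1] with n hn
  -- key deterministic estimate
  have heq : ((n : ℝ)⁻¹) • (∑ i ∈ Finset.range n,
      (inner ℝ (φ (W i ω).1) (hhat n ω - hl) : ℝ) • φ (W i ω).1)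
      + lam • (hhat n ω - hl) = (u n - b) + (T hl - v n) := by
    have h0 := hhat_eq n hn ω
    have hs : ∑ i ∈ Finset.range n, (inner ℝ (φ (W i ω).1) (hhat n ω - hl) : ℝ) • φ (W i ω).1
        = (∑ i ∈ Finset.range n, (inner ℝ (φ (W i ω).1) (hhat n ω) : ℝ) • φ (W i ω).1)
          - ∑ i ∈ Finset.range n, f2 (W i ω) := by
      rw [← Finset.sum_sub_distrib]
      refine Finset.sum_congr rfl fun i _ => ?_
      show _ = _ - (inner ℝ (φ (W i ω).1) hl : ℝ) • φ (W i ω).1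
      rw [inner_sub_right, sub_smul]
    have hXeq : u n = (n : ℝ)⁻¹ • ∑ i ∈ Finset.range n,
        (φ (W i ω).2 - p (W i ω).1 • φ (W i ω).1) := rfl
    rw [hs, smul_sub, smul_sub, hXeq, ← h0, ← hhl, hv]
    abel
  have hkey := kdm_ineq n (fun i => φ (W i ω).1) (hhat n ω - hl) _ ((n : ℝ)⁻¹) lam
    (by positivity) hlam heq
  refine hkey.trans ?_
  apply mul_le_mul_of_nonneg_left _ (inv_nonneg.mpr hlam.le)
  calc ‖(u n - b) + (T hl - v n)‖ ≤ ‖u n - b‖ + ‖T hl - v n‖ := norm_add_le _ _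
    _ = ‖u n - b‖ + ‖v n - T hl‖ := by rw [norm_sub_rev (T hl)]
end

section
/- In the KDM sampling setup, the sample estimator satisfies the following finite-sample guarantee: for every n ≥ 1, λ > 0 and η ∈ (0,1), 𝐏( { ω : ‖ĥ_{λ,n}(ω) − h_λ‖_H ≤ C_FS(η, ‖h_λ‖_H) · λ⁻¹ · n^{-1/2} } ) ≥ 1 − η, where C_FS(η, s) := 2·√(2·log(2/η)·κ∞)·(1 + π∞ + s·√κ∞). -/
open Real Set

lemma aux_sinh_le_mul_cosh {x : ℝ} (hx : 0 ≤ x) : Real.sinh x ≤ x * Real.cosh x := by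
  have h : ∀ y ∈ Set.Ici (0:ℝ), ∀ z ∈ Set.Ici (0:ℝ), y ≤ z →
      (fun t => t * Real.cosh t - Real.sinh t) y ≤ (fun t => t * Real.cosh t - Real.sinh t) z := by
    intro y hy z hz hyz
    have hmono : MonotoneOn (fun t => t * Real.cosh t - Real.sinh t) (Set.Ici (0:ℝ)) := by
      apply monotoneOn_of_deriv_nonneg (convex_Ici 0)
      · exact ((continuous_id.mul Real.continuous_cosh).sub Real.continuous_sinh).continuousOn
      · intro t ht
        exact ((differentiable_id.mul Real.differentiable_cosh).sub
          Real.differentiable_sinh).differentiableAt.differentiableWithinAt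
      · intro t ht
        rw [interior_Ici, Set.mem_Ioi] at ht
        have hd : HasDerivAt (fun t => t * Real.cosh t - Real.sinh t)
            (1 * Real.cosh t + t * Real.sinh t - Real.cosh t) t :=
          ((hasDerivAt_id t).mul (Real.hasDerivAt_cosh t)).sub (Real.hasDerivAt_sinh t)
        rw [hd.deriv]
        nlinarith [Real.sinh_nonneg_iff.2 ht.le]
    exact hmono hy hz hyz
  have := h 0 Set.self_mem_Ici x hx hx
  simpa using this

lemma aux_cosh_le_exp_sq {x : ℝ} : Real.cosh x ≤ Real.exp (x ^ 2 / 2) := by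
  wlog hx : 0 ≤ x with H
  · have := H (x := -x) (by linarith [lt_of_not_ge hx])
    simpa using this
  -- log cosh x ≤ x^2/2
  have key : Real.log (Real.cosh x) ≤ x ^ 2 / 2 := by
    have hmono : MonotoneOn (fun t => t ^ 2 / 2 - Real.log (Real.cosh t)) (Set.Ici (0:ℝ)) := by
      apply monotoneOn_of_deriv_nonneg (convex_Ici 0)
      · apply ContinuousOn.sub
        · exact (continuous_pow 2).continuousOn.div_const 2
        · exact (Real.continuous_cosh.continuousOn).log (fun t _ => (Real.cosh_pos t).ne')
      · intro t ht
        have : HasDerivAt (fun t => t ^ 2 / 2 - Real.log (Real.cosh t))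
            (2 * t ^ 1 / 2 - Real.sinh t / Real.cosh t) t := by
          exact (((hasDerivAt_pow 2 t).div_const 2)).sub
            ((Real.hasDerivAt_cosh t).log (Real.cosh_pos t).ne')
        exact this.differentiableAt.differentiableWithinAt
      · intro t ht
        rw [interior_Ici, Set.mem_Ioi] at ht
        have hd : HasDerivAt (fun t => t ^ 2 / 2 - Real.log (Real.cosh t))
            (2 * t ^ 1 / 2 - Real.sinh t / Real.cosh t) t :=
          (((hasDerivAt_pow 2 t).div_const 2)).sub
            ((Real.hasDerivAt_cosh t).log (Real.cosh_pos t).ne')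
        rw [hd.deriv]
        have h1 : Real.sinh t ≤ t * Real.cosh t := aux_sinh_le_mul_cosh ht.le
        have h2 : (0:ℝ) < Real.cosh t := Real.cosh_pos t
        rw [sub_nonneg, div_le_iff₀ h2] at *
        · simpa [pow_one] using (by nlinarith : Real.sinh t ≤ 2 * t ^ 1 / 2 * Real.cosh t)
    have := hmono (Set.self_mem_Ici) (Set.mem_Ici.2 hx) hx
    simpa using this
  calc Real.cosh x = Real.exp (Real.log (Real.cosh x)) := by
        rw [Real.exp_log (Real.cosh_pos x)]
    _ ≤ Real.exp (x ^ 2 / 2) := Real.exp_le_exp.2 key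

-- monotonicity of sinh t / t on (0, ∞)
lemma aux_sinh_div_mono : MonotoneOn (fun t => Real.sinh t / t) (Set.Ioi (0:ℝ)) := by
  apply monotoneOn_of_deriv_nonneg (convex_Ioi 0)
  · exact ContinuousOn.div Real.continuous_sinh.continuousOn continuousOn_id
      (fun t ht => ne_of_gt ht)
  · intro t ht
    rw [interior_Ioi] at ht
    exact ((Real.hasDerivAt_sinh t).div (hasDerivAt_id t) (ne_of_gt ht)).differentiableAt.differentiableWithinAt
  · intro t ht
    rw [interior_Ioi, Set.mem_Ioi] at ht
    have hd : HasDerivAt (fun t => Real.sinh t / t)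
        ((Real.cosh t * t - Real.sinh t * 1) / t ^ 2) t :=
      (Real.hasDerivAt_sinh t).div (hasDerivAt_id t) (ne_of_gt ht)
    rw [hd.deriv]
    have h1 : Real.sinh t ≤ t * Real.cosh t := aux_sinh_le_mul_cosh ht.le
    exact div_nonneg (by nlinarith) (sq_nonneg t)

lemma aux_convexOn_cosh_sqrt {c : ℝ} (hc : 0 ≤ c) :
    ConvexOn ℝ (Set.Ici (0:ℝ)) (fun s => Real.cosh (c * Real.sqrt s)) := by
  apply MonotoneOn.convexOn_of_deriv (convex_Ici 0)
  · exact Real.continuous_cosh.comp_continuousOn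
      ((continuous_sqrt.continuousOn).const_smul c)
  · intro s hs
    rw [interior_Ici, Set.mem_Ioi] at hs
    have hd : HasDerivAt (fun s => Real.cosh (c * Real.sqrt s))
        (Real.sinh (c * Real.sqrt s) * (c * (1 / (2 * Real.sqrt s)))) s :=
      (((Real.hasDerivAt_sqrt (ne_of_gt hs)).const_mul c)).cosh
    exact hd.differentiableAt.differentiableWithinAt
  · rw [interior_Ici]
    intro s hs t ht hst
    rw [Set.mem_Ioi] at hs ht
    have hds : HasDerivAt (fun s => Real.cosh (c * Real.sqrt s))
        (Real.sinh (c * Real.sqrt s) * (c * (1 / (2 * Real.sqrt s)))) s :=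
      (((Real.hasDerivAt_sqrt (ne_of_gt hs)).const_mul c)).cosh
    have hdt : HasDerivAt (fun s => Real.cosh (c * Real.sqrt s))
        (Real.sinh (c * Real.sqrt t) * (c * (1 / (2 * Real.sqrt t)))) t :=
      (((Real.hasDerivAt_sqrt (ne_of_gt ht)).const_mul c)).cosh
    rw [hds.deriv, hdt.deriv]
    have hss : 0 < Real.sqrt s := Real.sqrt_pos.2 hs
    have hts : 0 < Real.sqrt t := Real.sqrt_pos.2 ht
    rcases eq_or_lt_of_le hc with hc0 | hc0
    · simp [← hc0]
    have harg : c * Real.sqrt s ≤ c * Real.sqrt t :=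
      mul_le_mul_of_nonneg_left (Real.sqrt_le_sqrt hst) hc0.le
    have hmono := aux_sinh_div_mono (Set.mem_Ioi.2 (mul_pos hc0 hss))
      (Set.mem_Ioi.2 (mul_pos hc0 hts)) harg
    simp only at hmono
    rw [div_le_div_iff₀ (mul_pos hc0 hss) (mul_pos hc0 hts)] at hmono
    have e1 : Real.sinh (c * Real.sqrt s) * (c * (1 / (2 * Real.sqrt s)))
        = (Real.sinh (c * Real.sqrt s) * (c * Real.sqrt t)) / (2 * Real.sqrt s * Real.sqrt t) := by
      field_simp
    have e2 : Real.sinh (c * Real.sqrt t) * (c * (1 / (2 * Real.sqrt t)))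
        = (Real.sinh (c * Real.sqrt t) * (c * Real.sqrt s)) / (2 * Real.sqrt s * Real.sqrt t) := by
      field_simp
    rw [e1, e2]
    rw [div_le_div_iff_of_pos_right (by positivity)]
    nlinarith [hmono]

lemma aux_chord {c a B x : ℝ} (hc : 0 ≤ c) (ha : 0 < a) (hB : 0 < B) (hx : |x| ≤ a * B) :
    Real.cosh (c * Real.sqrt (a ^ 2 + B ^ 2 + 2 * x))
      ≤ ((Real.cosh (c * (a - B)) + Real.cosh (c * (a + B))) / 2)
        + x * ((Real.cosh (c * (a + B)) - Real.cosh (c * (a - B))) / (2 * (a * B))) := by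
  have hab : 0 < a * B := mul_pos ha hB
  have hθ1 : 0 ≤ (a * B - x) / (2 * (a * B)) := by
    apply div_nonneg _ (by positivity)
    have := (abs_le.1 hx).2; linarith
  have hθ2 : 0 ≤ (a * B + x) / (2 * (a * B)) := by
    apply div_nonneg _ (by positivity)
    have := (abs_le.1 hx).1; linarith
  have hne : (2 * (a * B)) ≠ 0 := by positivity
  have hθsum : (a * B - x) / (2 * (a * B)) + (a * B + x) / (2 * (a * B)) = 1 := by
    rw [← add_div, div_eq_one_iff_eq hne]; ring
  have hmem1 : ((a - B) ^ 2 : ℝ) ∈ Set.Ici (0:ℝ) := Set.mem_Ici.2 (sq_nonneg _)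
  have hmem2 : ((a + B) ^ 2 : ℝ) ∈ Set.Ici (0:ℝ) := Set.mem_Ici.2 (sq_nonneg _)
  have hconv := (aux_convexOn_cosh_sqrt hc).2 hmem1 hmem2 hθ1 hθ2 hθsum
  simp only [smul_eq_mul] at hconv
  have hcomb : (a * B - x) / (2 * (a * B)) * ((a - B) ^ 2 : ℝ)
      + (a * B + x) / (2 * (a * B)) * ((a + B) ^ 2 : ℝ) = a ^ 2 + B ^ 2 + 2 * x := by
    rw [div_mul_eq_mul_div, div_mul_eq_mul_div, ← add_div, div_eq_iff hne]; ring
  rw [hcomb] at hconv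
  have hs1 : Real.cosh (c * Real.sqrt ((a - B) ^ 2)) = Real.cosh (c * (a - B)) := by
    rw [Real.sqrt_sq_eq_abs, show c * |a - B| = |c * (a - B)| by
      rw [abs_mul, abs_of_nonneg hc], Real.cosh_abs]
  have hs2 : Real.cosh (c * Real.sqrt ((a + B) ^ 2)) = Real.cosh (c * (a + B)) := by
    rw [Real.sqrt_sq_eq_abs, show c * |a + B| = |c * (a + B)| by
      rw [abs_mul, abs_of_nonneg hc], Real.cosh_abs]
  rw [hs1, hs2] at hconv
  calc Real.cosh (c * Real.sqrt (a ^ 2 + B ^ 2 + 2 * x))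
      ≤ (a * B - x) / (2 * (a * B)) * Real.cosh (c * (a - B))
        + (a * B + x) / (2 * (a * B)) * Real.cosh (c * (a + B)) := hconv
    _ = ((Real.cosh (c * (a - B)) + Real.cosh (c * (a + B))) / 2)
        + x * ((Real.cosh (c * (a + B)) - Real.cosh (c * (a - B))) / (2 * (a * B))) := by
        field_simp
        ring

open MeasureTheory in
lemma aux_step {α : Type*} [MeasurableSpace α] (ν : Measure α) [IsProbabilityMeasure ν]
    {H : Type*} [NormedAddCommGroup H] [InnerProductSpace ℝ H] [CompleteSpace H]
    {ξ : α → H} (hmeas : AEStronglyMeasurable ξ ν) {B c : ℝ} (hc : 0 ≤ c)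
    (hB : ∀ x, ‖ξ x‖ ≤ B) (hmean : ∫ x, ξ x ∂ν = 0) (u : H) :
    ∫ x, Real.cosh (c * ‖u + ξ x‖) ∂ν
      ≤ Real.cosh (c * ‖u‖) * Real.exp (c ^ 2 * B ^ 2 / 2) := by
  have hne : Nonempty α := by
    by_contra hne
    rw [not_nonempty_iff] at hne
    have h1 : ν Set.univ = 1 := measure_univ
    rw [Set.univ_eq_empty_iff.2 hne, measure_empty] at h1
    exact zero_ne_one h1
  obtain ⟨x₀⟩ := hne
  have hB0 : 0 ≤ B := le_trans (norm_nonneg _) (hB x₀)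
  -- measurability and integrability of the integrand
  have hmeas1 : AEStronglyMeasurable (fun x => Real.cosh (c * ‖u + ξ x‖)) ν :=
    Real.continuous_cosh.comp_aestronglyMeasurable
      (((aestronglyMeasurable_const.add hmeas).norm).const_mul c)
  have hbound : ∀ x, Real.cosh (c * ‖u + ξ x‖) ≤ Real.cosh (c * (‖u‖ + B)) := by
    intro x
    apply Real.cosh_le_cosh.2
    rw [abs_of_nonneg (by positivity), abs_of_nonneg (by positivity)]
    apply mul_le_mul_of_nonneg_left _ hc
    exact le_trans (norm_add_le _ _) (by linarith [hB x])
  have hint : Integrable (fun x => Real.cosh (c * ‖u + ξ x‖)) ν := by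
    apply Integrable.mono' (integrable_const (Real.cosh (c * (‖u‖ + B)))) hmeas1
    filter_upwards with x
    rw [Real.norm_eq_abs, abs_of_nonneg (Real.cosh_pos _).le]
    exact hbound x
  have hcosh_exp : Real.cosh (c * B) ≤ Real.exp (c ^ 2 * B ^ 2 / 2) := by
    calc Real.cosh (c * B) ≤ Real.exp ((c * B) ^ 2 / 2) := aux_cosh_le_exp_sq
      _ = Real.exp (c ^ 2 * B ^ 2 / 2) := by ring_nf
  rcases eq_or_lt_of_le hB0 with hB0' | hBpos
  · -- B = 0 : ξ = 0
    have hξ : ∀ x, ξ x = 0 := fun x =>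
      norm_le_zero_iff.1 (hB0' ▸ hB x)
    have : ∀ x, Real.cosh (c * ‖u + ξ x‖) = Real.cosh (c * ‖u‖) := by
      intro x; rw [hξ x, add_zero]
    rw [integral_congr_ae (ae_of_all _ this), integral_const, probReal_univ]
    simp only [ENNReal.toReal_one, one_smul]
    nlinarith [Real.cosh_pos (c * ‖u‖), Real.one_le_exp (by positivity : (0:ℝ) ≤ c ^ 2 * B ^ 2 / 2)]
  rcases eq_or_lt_of_le (norm_nonneg u) with ha0 | hapos
  · -- ‖u‖ = 0
    calc ∫ x, Real.cosh (c * ‖u + ξ x‖) ∂ν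
        ≤ ∫ _x, Real.cosh (c * B) ∂ν := by
          apply integral_mono hint (integrable_const _)
          intro x
          apply Real.cosh_le_cosh.2
          rw [abs_of_nonneg (by positivity), abs_of_nonneg (by positivity)]
          apply mul_le_mul_of_nonneg_left _ hc
          have : u = 0 := norm_eq_zero.1 ha0.symm
          rw [this, zero_add]; exact hB x
      _ = Real.cosh (c * B) := by rw [integral_const, probReal_univ]; simp
      _ ≤ Real.cosh (c * ‖u‖) * Real.exp (c ^ 2 * B ^ 2 / 2) := by
          rw [← ha0, mul_zero, Real.cosh_zero, one_mul]; exact hcosh_exp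
  -- main case : a = ‖u‖ > 0, B > 0
  set a := ‖u‖ with ha_def
  set C0 := (Real.cosh (c * (a - B)) + Real.cosh (c * (a + B))) / 2 with hC0
  set C1 := (Real.cosh (c * (a + B)) - Real.cosh (c * (a - B))) / (2 * (a * B)) with hC1
  have hXint : Integrable (fun x => (inner ℝ u (ξ x) : ℝ)) ν := by
    apply Integrable.mono' (integrable_const (a * B))
      (AEStronglyMeasurable.inner aestronglyMeasurable_const hmeas)
    filter_upwards with x
    rw [Real.norm_eq_abs]
    exact le_trans (abs_real_inner_le_norm u (ξ x))
      (mul_le_mul_of_nonneg_left (hB x) (norm_nonneg u))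
  have hpt : ∀ x, Real.cosh (c * ‖u + ξ x‖) ≤ C0 + C1 * (inner ℝ u (ξ x) : ℝ) := by
    intro x
    have h1 : ‖u + ξ x‖ = Real.sqrt (‖u + ξ x‖ ^ 2) := (Real.sqrt_sq (norm_nonneg _)).symm
    have h2 : (‖u + ξ x‖:ℝ) ^ 2 = a ^ 2 + 2 * (inner ℝ u (ξ x) : ℝ) + ‖ξ x‖ ^ 2 := by
      rw [ha_def]; exact norm_add_sq_real u (ξ x)
    have h3 : Real.cosh (c * ‖u + ξ x‖)
        ≤ Real.cosh (c * Real.sqrt (a ^ 2 + B ^ 2 + 2 * (inner ℝ u (ξ x) : ℝ))) := by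
      rw [h1]
      apply Real.cosh_le_cosh.2
      have hs : Real.sqrt (‖u + ξ x‖ ^ 2)
          ≤ Real.sqrt (a ^ 2 + B ^ 2 + 2 * (inner ℝ u (ξ x) : ℝ)) := by
        apply Real.sqrt_le_sqrt
        rw [h2]
        nlinarith [hB x, norm_nonneg (ξ x)]
      rw [abs_of_nonneg (by positivity), abs_of_nonneg (by positivity)]
      exact mul_le_mul_of_nonneg_left hs hc
    refine le_trans h3 ?_
    have := aux_chord (x := (inner ℝ u (ξ x) : ℝ)) hc hapos hBpos
      (le_trans (abs_real_inner_le_norm u (ξ x))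
        (mul_le_mul_of_nonneg_left (hB x) (norm_nonneg u)))
    rw [hC0, hC1]
    linarith [this]
  calc ∫ x, Real.cosh (c * ‖u + ξ x‖) ∂ν
      ≤ ∫ x, (C0 + C1 * (inner ℝ u (ξ x) : ℝ)) ∂ν := by
        apply integral_mono hint ((integrable_const C0).add (hXint.const_mul C1))
        exact hpt
    _ = C0 + C1 * ∫ x, (inner ℝ u (ξ x) : ℝ) ∂ν := by
        rw [integral_add (integrable_const C0) (hXint.const_mul C1), integral_const,
          probReal_univ, MeasureTheory.integral_const_mul]
        simp
    _ = C0 := by rw [integral_inner (by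
          exact Integrable.mono' (integrable_const B) hmeas (ae_of_all _ hB)) u, hmean,
          inner_zero_right]; ring
    _ = Real.cosh (c * a) * Real.cosh (c * B) := by
        rw [hC0, mul_sub, mul_add, Real.cosh_sub, Real.cosh_add]; ring
    _ ≤ Real.cosh (c * a) * Real.exp (c ^ 2 * B ^ 2 / 2) :=
        mul_le_mul_of_nonneg_left hcosh_exp (Real.cosh_pos _).le

open MeasureTheory in
lemma aux_pi {α : Type*} [MeasurableSpace α] (ν : Measure α) [IsProbabilityMeasure ν]
    {H : Type*} [NormedAddCommGroup H] [InnerProductSpace ℝ H] [CompleteSpace H]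
    {ξ : α → H} (hmeas : StronglyMeasurable ξ) {B c : ℝ} (hc : 0 ≤ c)
    (hB : ∀ x, ‖ξ x‖ ≤ B) (hmean : ∫ x, ξ x ∂ν = 0) :
    ∀ (n : ℕ) (u : H),
      ∫ x : (Fin n → α), Real.cosh (c * ‖u + ∑ i, ξ (x i)‖) ∂(Measure.pi fun _ => ν)
        ≤ Real.cosh (c * ‖u‖) * Real.exp (n * (c ^ 2 * B ^ 2 / 2)) := by
  have hne : Nonempty α := by
    by_contra hne
    rw [not_nonempty_iff] at hne
    have h1 : ν Set.univ = 1 := measure_univ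
    rw [Set.univ_eq_empty_iff.2 hne, measure_empty] at h1
    exact zero_ne_one h1
  obtain ⟨x₀⟩ := hne
  have hB0 : 0 ≤ B := le_trans (norm_nonneg _) (hB x₀)
  intro n
  induction n with
  | zero =>
      intro u
      simp only [Finset.univ_eq_empty, Finset.sum_empty, add_zero, Nat.cast_zero, zero_mul,
        Real.exp_zero, mul_one]
      rw [integral_const, probReal_univ]
      simp
  | succ n IH =>
      intro u
      have hmp := measurePreserving_piFinSuccAbove (fun _ : Fin (n+1) => ν) 0
      set e := MeasurableEquiv.piFinSuccAbove (fun _ : Fin (n+1) => α) 0 with he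
      set G : α × (Fin n → α) → ℝ :=
        fun q => Real.cosh (c * ‖(u + ξ q.1) + ∑ j, ξ (q.2 j)‖) with hG
      have hcomp : ∀ x : Fin (n+1) → α,
          Real.cosh (c * ‖u + ∑ i, ξ (x i)‖) = G (e x) := by
        intro x
        have hsum : ∑ i, ξ (x i) = ξ (x 0) + ∑ j, ξ (x (Fin.succAbove 0 j)) :=
          Fin.sum_univ_succAbove (fun i => ξ (x i)) 0
        simp only [hG, he, MeasurableEquiv.piFinSuccAbove_apply]
        rw [hsum, add_assoc]
        rfl
      -- measurability of G
      have hGsm : StronglyMeasurable G := by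
        apply Real.continuous_cosh.comp_stronglyMeasurable
        apply StronglyMeasurable.const_mul
        apply StronglyMeasurable.norm
        apply StronglyMeasurable.add
        · exact stronglyMeasurable_const.add (hmeas.comp_measurable measurable_fst)
        · exact Finset.stronglyMeasurable_fun_sum _ fun j _ =>
            hmeas.comp_measurable ((measurable_pi_apply j).comp measurable_snd)
      have hGbd : ∀ q, ‖G q‖ ≤ Real.cosh (c * (‖u‖ + B + n * B)) := by
        intro q
        rw [Real.norm_eq_abs, abs_of_nonneg (Real.cosh_pos _).le]
        apply Real.cosh_le_cosh.2
        rw [abs_of_nonneg (by positivity), abs_of_nonneg (by positivity)]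
        apply mul_le_mul_of_nonneg_left _ hc
        calc ‖(u + ξ q.1) + ∑ j, ξ (q.2 j)‖ ≤ ‖u + ξ q.1‖ + ‖∑ j, ξ (q.2 j)‖ :=
              norm_add_le _ _
          _ ≤ (‖u‖ + B) + n * B := by
              gcongr
              · exact le_trans (norm_add_le _ _) (by linarith [hB q.1])
              · refine le_trans (norm_sum_le _ _) ?_
                calc (∑ j, ‖ξ (q.2 j)‖) ≤ ∑ _j : Fin n, B :=
                      Finset.sum_le_sum fun j _ => hB (q.2 j)
                  _ = n * B := by rw [Finset.sum_const, Finset.card_univ, Fintype.card_fin,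
                      nsmul_eq_mul]
          _ = ‖u‖ + B + n * B := rfl
      have hGint : Integrable G (ν.prod (Measure.pi fun _ : Fin n => ν)) :=
        Integrable.mono' (integrable_const _) hGsm.aestronglyMeasurable
          (ae_of_all _ hGbd)
      calc ∫ x : Fin (n+1) → α, Real.cosh (c * ‖u + ∑ i, ξ (x i)‖)
              ∂(Measure.pi fun _ => ν)
          = ∫ x : Fin (n+1) → α, G (e x) ∂(Measure.pi fun _ => ν) := by
            exact integral_congr_ae (ae_of_all _ hcomp)
        _ = ∫ q, G q ∂(ν.prod (Measure.pi fun _ : Fin n => ν)) := by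
            exact hmp.integral_comp' G
        _ = ∫ x₁, (∫ y, G (x₁, y) ∂(Measure.pi fun _ : Fin n => ν)) ∂ν :=
            integral_prod G hGint
        _ ≤ ∫ x₁, Real.cosh (c * ‖u + ξ x₁‖) * Real.exp (n * (c ^ 2 * B ^ 2 / 2)) ∂ν := by
            apply integral_mono hGint.integral_prod_left
            · apply Integrable.mul_const
              apply Integrable.mono' (integrable_const (Real.cosh (c * (‖u‖ + B))))
              · exact (Real.continuous_cosh.comp_stronglyMeasurable
                  (((stronglyMeasurable_const.add hmeas).norm).const_mul c)).aestronglyMeasurable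
              · filter_upwards with x
                rw [Real.norm_eq_abs, abs_of_nonneg (Real.cosh_pos _).le]
                apply Real.cosh_le_cosh.2
                rw [abs_of_nonneg (by positivity), abs_of_nonneg (by positivity)]
                apply mul_le_mul_of_nonneg_left _ hc
                exact le_trans (norm_add_le _ _) (by linarith [hB x])
            · intro x₁
              simpa [hG] using IH (u + ξ x₁)
        _ = (∫ x₁, Real.cosh (c * ‖u + ξ x₁‖) ∂ν) * Real.exp (n * (c ^ 2 * B ^ 2 / 2)) :=
            integral_mul_const _ _
        _ ≤ (Real.cosh (c * ‖u‖) * Real.exp (c ^ 2 * B ^ 2 / 2))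
              * Real.exp (n * (c ^ 2 * B ^ 2 / 2)) :=
            mul_le_mul_of_nonneg_right
              (aux_step ν hmeas.aestronglyMeasurable hc hB hmean u) (Real.exp_nonneg _)
        _ = Real.cosh (c * ‖u‖) * Real.exp ((n + 1 : ℕ) * (c ^ 2 * B ^ 2 / 2)) := by
            rw [mul_assoc, ← Real.exp_add]
            push_cast
            ring_nf

open MeasureTheory ProbabilityTheory in
lemma aux_law {Ω β : Type*} [MeasurableSpace Ω] [MeasurableSpace β]
    (Prob : Measure Ω) [IsProbabilityMeasure Prob] (W : ℕ → Ω → β)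
    (hWmeas : ∀ i, Measurable (W i))
    (hindep : iIndepFun W Prob)
    (μ : Measure β) [IsProbabilityMeasure μ]
    (hdist : ∀ i, Measure.map (W i) Prob = μ) (n : ℕ) :
    Measure.map (fun ω => fun i : Fin n => W i ω) Prob
      = Measure.pi (fun _ : Fin n => μ) := by
  have hJ : Measurable (fun ω => fun i : Fin n => W i ω) :=
    measurable_pi_lambda _ (fun i => hWmeas i)
  refine (Measure.pi_eq fun s hs => ?_).symm
  rw [Measure.map_apply hJ (MeasurableSet.univ_pi hs)]
  classical
  set sets : ℕ → Set β := fun i => if h : i < n then s ⟨i, h⟩ else Set.univ with hsets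
  have hsets_meas : ∀ i ∈ Finset.range n, MeasurableSet (sets i) := by
    intro i hi
    rw [hsets]
    simp only
    rw [dif_pos (Finset.mem_range.1 hi)]
    exact hs _
  have hpre : (fun ω => fun i : Fin n => W i ω) ⁻¹' (Set.univ.pi s)
      = ⋂ i ∈ Finset.range n, W i ⁻¹' sets i := by
    ext ω
    simp only [Set.mem_preimage, Set.mem_pi, Set.mem_univ, forall_true_left,
      Set.mem_iInter, Finset.mem_range]
    constructor
    · intro h i hi
      rw [hsets]; simp only [Set.mem_preimage]; rw [dif_pos hi]; exact h ⟨i, hi⟩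
    · intro h i
      have := h i.1 i.2
      rw [hsets] at this; simp only [Set.mem_preimage] at this
      rw [dif_pos i.2] at this
      exact this
  rw [hpre, hindep.measure_inter_preimage_eq_mul (Finset.range n) hsets_meas]
  have heach : ∀ i, Prob (W i ⁻¹' sets i) = μ (sets i) := by
    intro i
    rcases lt_or_ge i n with hi | hi
    · rw [← hdist i, Measure.map_apply (hWmeas i)]
      rw [hsets]; simp only; rw [dif_pos hi]; exact hs _
    · rw [hsets]; simp only; rw [dif_neg (not_lt.2 hi)]
      simp
  calc (∏ i ∈ Finset.range n, Prob (W i ⁻¹' sets i))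
      = ∏ i ∈ Finset.range n, μ (sets i) := Finset.prod_congr rfl fun i _ => heach i
    _ = ∏ i : Fin n, μ (sets i.1) := (Fin.prod_univ_eq_prod_range (fun i => μ (sets i)) n).symm
    _ = ∏ i : Fin n, μ (s i) := by
        apply Finset.prod_congr rfl
        intro i _
        rw [hsets]; simp only; rw [dif_pos i.2]

open MeasureTheory ProbabilityTheory in
lemma aux_conc {Ω β : Type*} [MeasurableSpace Ω] [MeasurableSpace β]
    (Prob : Measure Ω) [IsProbabilityMeasure Prob] (W : ℕ → Ω → β)
    (hWmeas : ∀ i, Measurable (W i))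
    (hindep : iIndepFun W Prob)
    (μ : Measure β) [IsProbabilityMeasure μ]
    (hdist : ∀ i, Measure.map (W i) Prob = μ)
    {H : Type*} [NormedAddCommGroup H] [InnerProductSpace ℝ H] [CompleteSpace H]
    {ξ : β → H} (hmeas : StronglyMeasurable ξ) {B : ℝ} (hBpos : 0 < B)
    (hB : ∀ x, ‖ξ x‖ ≤ B) (hmean : ∫ x, ξ x ∂μ = 0)
    {n : ℕ} (hn : 1 ≤ n) {r : ℝ} (hr : 0 < r) :
    Prob {ω | r < ‖∑ i ∈ Finset.range n, ξ (W i ω)‖}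
      ≤ ENNReal.ofReal (2 * Real.exp (-(r ^ 2) / (2 * n * B ^ 2))) := by
  have hnR : (0:ℝ) < n := by exact_mod_cast hn
  set c : ℝ := r / (n * B ^ 2) with hc_def
  have hc : 0 < c := div_pos hr (by positivity)
  set S : Ω → H := fun ω => ∑ i ∈ Finset.range n, ξ (W i ω) with hS
  -- strong measurability of ω ↦ cosh (c * ‖S ω‖)
  have hSsm : StronglyMeasurable S :=
    Finset.stronglyMeasurable_fun_sum _ fun i _ => hmeas.comp_measurable (hWmeas i)
  have hfsm : StronglyMeasurable (fun ω => Real.cosh (c * ‖S ω‖)) :=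
    Real.continuous_cosh.comp_stronglyMeasurable ((hSsm.norm).const_mul c)
  have hSbd : ∀ ω, ‖S ω‖ ≤ n * B := by
    intro ω
    refine le_trans (norm_sum_le _ _) ?_
    calc (∑ i ∈ Finset.range n, ‖ξ (W i ω)‖) ≤ ∑ _i ∈ Finset.range n, B :=
          Finset.sum_le_sum fun i _ => hB _
      _ = n * B := by rw [Finset.sum_const, Finset.card_range, nsmul_eq_mul]
  have hfint : Integrable (fun ω => Real.cosh (c * ‖S ω‖)) Prob := by
    apply Integrable.mono' (integrable_const (Real.cosh (c * (n * B))))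
      hfsm.aestronglyMeasurable
    filter_upwards with ω
    rw [Real.norm_eq_abs, abs_of_nonneg (Real.cosh_pos _).le]
    apply Real.cosh_le_cosh.2
    rw [abs_of_nonneg (by positivity), abs_of_nonneg (by positivity)]
    exact mul_le_mul_of_nonneg_left (hSbd ω) hc.le
  -- the mgf bound via the product measure
  have hmgf : ∫ ω, Real.cosh (c * ‖S ω‖) ∂Prob
      ≤ Real.exp (n * (c ^ 2 * B ^ 2 / 2)) := by
    have hlaw := aux_law Prob W hWmeas hindep μ hdist n
    have hgsm : StronglyMeasurable
        (fun x : Fin n → β => Real.cosh (c * ‖(0:H) + ∑ i, ξ (x i)‖)) := by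
      apply Real.continuous_cosh.comp_stronglyMeasurable
      apply StronglyMeasurable.const_mul
      apply StronglyMeasurable.norm
      exact stronglyMeasurable_const.add
        (Finset.stronglyMeasurable_fun_sum _ fun i _ =>
          hmeas.comp_measurable (measurable_pi_apply i))
    have hJ : Measurable (fun ω => fun i : Fin n => W i ω) :=
      measurable_pi_lambda _ (fun i => hWmeas i)
    have heq : ∫ ω, Real.cosh (c * ‖S ω‖) ∂Prob
        = ∫ x : Fin n → β, Real.cosh (c * ‖(0:H) + ∑ i, ξ (x i)‖)
            ∂(Measure.pi fun _ : Fin n => μ) := by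
      rw [← hlaw, integral_map hJ.aemeasurable hgsm.aestronglyMeasurable]
      apply integral_congr_ae
      filter_upwards with ω
      rw [zero_add, hS]
      congr 1
      rw [Fin.sum_univ_eq_sum_range (fun i => ξ (W i ω)) n]
    rw [heq]
    have := aux_pi μ hmeas hc.le hB hmean n 0
    simpa using this
  -- Markov
  set ε : ℝ := Real.cosh (c * r) with hε
  have hεpos : 0 < ε := Real.cosh_pos _
  have hsub : {ω | r < ‖S ω‖} ⊆ {ω | ε ≤ Real.cosh (c * ‖S ω‖)} := by
    intro ω hω
    simp only [Set.mem_setOf_eq] at hω ⊢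
    apply Real.cosh_le_cosh.2
    rw [abs_of_nonneg (by positivity), abs_of_nonneg (by positivity)]
    exact mul_le_mul_of_nonneg_left hω.le hc.le
  have hmarkov := mul_meas_ge_le_integral_of_nonneg
    (ae_of_all _ fun ω => (Real.cosh_pos (c * ‖S ω‖)).le) hfint ε
  have htoReal : (Prob {ω | r < ‖S ω‖}).toReal
      ≤ 2 * Real.exp (-(r ^ 2) / (2 * n * B ^ 2)) := by
    have h1 : (Prob {ω | r < ‖S ω‖}).toReal
        ≤ (Prob {ω | ε ≤ Real.cosh (c * ‖S ω‖)}).toReal :=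
      ENNReal.toReal_mono (measure_ne_top _ _) (measure_mono hsub)
    have h2 : (Prob {ω | ε ≤ Real.cosh (c * ‖S ω‖)}).toReal
        ≤ Real.exp (n * (c ^ 2 * B ^ 2 / 2)) / ε := by
      rw [le_div_iff₀ hεpos]
      calc (Prob {ω | ε ≤ Real.cosh (c * ‖S ω‖)}).toReal * ε
          = ε * (Prob {ω | ε ≤ Real.cosh (c * ‖S ω‖)}).toReal := mul_comm _ _
        _ ≤ ∫ ω, Real.cosh (c * ‖S ω‖) ∂Prob := hmarkov
        _ ≤ Real.exp (n * (c ^ 2 * B ^ 2 / 2)) := hmgf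
    have h3 : Real.exp (n * (c ^ 2 * B ^ 2 / 2)) / ε
        ≤ 2 * Real.exp (n * (c ^ 2 * B ^ 2 / 2)) * Real.exp (-(c * r)) := by
      have hexp2 : Real.exp (c * r) ≤ 2 * ε := by
        rw [hε, Real.cosh_eq]
        have := Real.exp_pos (-(c * r))
        linarith
      rw [div_le_iff₀ hεpos, Real.exp_neg]
      have hepos : 0 < Real.exp (c * r) := Real.exp_pos _
      have hEpos : 0 < Real.exp (n * (c ^ 2 * B ^ 2 / 2)) := Real.exp_pos _
      calc Real.exp (n * (c ^ 2 * B ^ 2 / 2))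
          = Real.exp (n * (c ^ 2 * B ^ 2 / 2)) * ((Real.exp (c * r))⁻¹ * Real.exp (c * r)) := by
            rw [inv_mul_cancel₀ hepos.ne', mul_one]
        _ ≤ Real.exp (n * (c ^ 2 * B ^ 2 / 2)) * ((Real.exp (c * r))⁻¹ * (2 * ε)) := by
            apply mul_le_mul_of_nonneg_left _ hEpos.le
            exact mul_le_mul_of_nonneg_left hexp2 (by positivity)
        _ = 2 * Real.exp (n * (c ^ 2 * B ^ 2 / 2)) * (Real.exp (c * r))⁻¹ * ε := by ring
    have h4 : 2 * Real.exp (n * (c ^ 2 * B ^ 2 / 2)) * Real.exp (-(c * r))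
        = 2 * Real.exp (-(r ^ 2) / (2 * n * B ^ 2)) := by
      rw [mul_assoc, ← Real.exp_add]
      congr 2
      rw [hc_def]
      field_simp
      ring
    linarith
  calc Prob {ω | r < ‖S ω‖}
      = ENNReal.ofReal ((Prob {ω | r < ‖S ω‖}).toReal) :=
        (ENNReal.ofReal_toReal (measure_ne_top _ _)).symm
    _ ≤ ENNReal.ofReal (2 * Real.exp (-(r ^ 2) / (2 * n * B ^ 2))) :=
        ENNReal.ofReal_le_ofReal htoReal

open MeasureTheory


set_option maxHeartbeats 1000000 in
/-- (KDM finite-sample guarantee.)  In the KDM sampling setup, for every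
`n ≥ 1`, `λ > 0` and `η ∈ (0,1)`, with `𝐏`-probability at least `1 − η` one has
`‖ĥ_{λ,n} − h_λ‖ ≤ C_FS(η, ‖h_λ‖) · λ⁻¹ · n^{-1/2}`, where
`C_FS(η, s) = 2·√(2·log(2/η)·κ∞)·(1 + π∞ + s·√κ∞)`. -/
theorem kdm_finite_sample_guarantee
    {Z : Type*} [MeasurableSpace Z]
    (P Q : Measure Z) [IsProbabilityMeasure P] [IsProbabilityMeasure Q]
    (hQP : Q ≪ P)
    (hg2 : Integrable (fun z => ((Q.rnDeriv P z).toReal) ^ 2) P)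
    {H : Type*} [NormedAddCommGroup H] [InnerProductSpace ℝ H] [CompleteSpace H]
    [TopologicalSpace.SeparableSpace H]
    (φ : Z → H) (hφ : StronglyMeasurable φ)
    (κ : ℝ) (hκ : ∀ z, (inner ℝ (φ z) (φ z) : ℝ) ≤ κ)
    (p : Z → ℝ) (hp : Measurable p) (πB : ℝ) (hpB : ∀ z, |p z| ≤ πB)
    (T : H →L[ℝ] H) (hT : ∀ h : H, T h = ∫ z, (inner ℝ (φ z) h : ℝ) • φ z ∂P)
    (b : H) (hb : b = (∫ z, φ z ∂Q) - ∫ z, p z • φ z ∂P)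
    (hlfun : ℝ → H)
    (hlsol : ∀ lam : ℝ, 0 < lam → T (hlfun lam) + lam • hlfun lam = b)
    -- sampling setup: i.i.d. samples of P ⊗ Q
    {Ω : Type*} [MeasurableSpace Ω] (Prob : Measure Ω) [IsProbabilityMeasure Prob]
    (W : ℕ → Ω → Z × Z) (hWmeas : ∀ i, Measurable (W i))
    (hindep : ProbabilityTheory.iIndepFun W Prob)
    (hdist : ∀ i, Measure.map (W i) Prob = P.prod Q)
    -- the sample estimator
    (hhat : ℝ → ℕ → Ω → H)
    (hhat_eq : ∀ (lam : ℝ), 0 < lam → ∀ n : ℕ, 1 ≤ n → ∀ ω : Ω,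
      (n : ℝ)⁻¹ • (∑ i ∈ Finset.range n,
          (inner ℝ (φ (W i ω).1) (hhat lam n ω) : ℝ) • φ (W i ω).1)
        + lam • hhat lam n ω
      = (n : ℝ)⁻¹ • ∑ i ∈ Finset.range n,
          (φ (W i ω).2 - p (W i ω).1 • φ (W i ω).1))
    -- the finite-sample coefficient
    (C_FS : ℝ → ℝ → ℝ)
    (hC : ∀ η s : ℝ, C_FS η s
      = 2 * Real.sqrt (2 * Real.log (2 / η) * κ) * (1 + πB + s * Real.sqrt κ)) :
    ∀ n : ℕ, 1 ≤ n → ∀ lam : ℝ, 0 < lam → ∀ η : ℝ, 0 < η → η < 1 →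
      ENNReal.ofReal (1 - η)
        ≤ Prob {ω : Ω | ‖hhat lam n ω - hlfun lam‖
            ≤ C_FS η ‖hlfun lam‖ * lam⁻¹ * (n : ℝ) ^ (-(1/2 : ℝ))} := by
  intro n hn lam hlam η hη0 hη1
  -- basic facts
  have hZ : Nonempty Z := by
    by_contra hne
    rw [not_nonempty_iff] at hne
    have h1 : P Set.univ = 1 := measure_univ
    rw [Set.univ_eq_empty_iff.2 hne, measure_empty] at h1
    exact zero_ne_one h1
  obtain ⟨z₀⟩ := hZ
  have hκ0 : 0 ≤ κ := le_trans real_inner_self_nonneg (hκ z₀)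
  have hπB0 : 0 ≤ πB := le_trans (abs_nonneg _) (hpB z₀)
  have hφnorm : ∀ z, ‖φ z‖ ≤ Real.sqrt κ := by
    intro z
    have h2 : ‖φ z‖ ^ 2 ≤ κ := by rw [← real_inner_self_eq_norm_sq]; exact hκ z
    rw [← Real.sqrt_sq (norm_nonneg (φ z))]
    exact Real.sqrt_le_sqrt h2
  set h : H := hlfun lam with hh_def
  set μ : Measure (Z × Z) := P.prod Q with hμ_def
  set fac : ℝ := 1 + πB + ‖h‖ * Real.sqrt κ with hfac_def
  have hfac1 : 1 ≤ fac := by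
    rw [hfac_def]
    nlinarith [norm_nonneg h, Real.sqrt_nonneg κ]
  set M₀ : ℝ := Real.sqrt κ * fac with hM₀_def
  set F : Z × Z → H := fun w =>
    φ w.2 - p w.1 • φ w.1 - (inner ℝ (φ w.1) h : ℝ) • φ w.1 with hF_def
  have hFsm : StronglyMeasurable F := by
    apply StronglyMeasurable.sub
    apply StronglyMeasurable.sub
    · exact hφ.comp_measurable measurable_snd
    · exact ((hp.comp measurable_fst).stronglyMeasurable).smul
        (hφ.comp_measurable measurable_fst)
    · exact (StronglyMeasurable.inner (hφ.comp_measurable measurable_fst)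
        stronglyMeasurable_const).smul (hφ.comp_measurable measurable_fst)
  have hFbd : ∀ w, ‖F w‖ ≤ M₀ := by
    intro w
    have h1 : ‖φ w.2‖ ≤ Real.sqrt κ := hφnorm _
    have h2 : ‖p w.1 • φ w.1‖ ≤ πB * Real.sqrt κ := by
      rw [norm_smul, Real.norm_eq_abs]
      exact mul_le_mul (hpB _) (hφnorm _) (norm_nonneg _) hπB0
    have h3 : ‖(inner ℝ (φ w.1) h : ℝ) • φ w.1‖ ≤ Real.sqrt κ * ‖h‖ * Real.sqrt κ := by
      rw [norm_smul, Real.norm_eq_abs]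
      have := abs_real_inner_le_norm (φ w.1) h
      have h4 : |(inner ℝ (φ w.1) h : ℝ)| ≤ Real.sqrt κ * ‖h‖ :=
        le_trans this (mul_le_mul_of_nonneg_right (hφnorm _) (norm_nonneg h))
      exact mul_le_mul h4 (hφnorm _) (norm_nonneg _) (by positivity)
    calc ‖F w‖ ≤ ‖φ w.2 - p w.1 • φ w.1‖ + ‖(inner ℝ (φ w.1) h : ℝ) • φ w.1‖ :=
          norm_sub_le _ _
      _ ≤ (‖φ w.2‖ + ‖p w.1 • φ w.1‖) + ‖(inner ℝ (φ w.1) h : ℝ) • φ w.1‖ := by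
          gcongr; exact norm_sub_le _ _
      _ ≤ (Real.sqrt κ + πB * Real.sqrt κ) + Real.sqrt κ * ‖h‖ * Real.sqrt κ := by
          gcongr
      _ = M₀ := by rw [hM₀_def, hfac_def]; ring
  have hFint : Integrable F μ :=
    Integrable.mono' (integrable_const M₀) hFsm.aestronglyMeasurable
      (ae_of_all _ hFbd)
  -- mean of F
  have hm : ∫ w, F w ∂μ = lam • h := by
    have hf1sm : StronglyMeasurable (fun w : Z × Z => φ w.2) :=
      hφ.comp_measurable measurable_snd
    have hf2sm : StronglyMeasurable (fun w : Z × Z => p w.1 • φ w.1) :=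
      ((hp.comp measurable_fst).stronglyMeasurable).smul (hφ.comp_measurable measurable_fst)
    have hf3sm : StronglyMeasurable (fun w : Z × Z => (inner ℝ (φ w.1) h : ℝ) • φ w.1) :=
      (StronglyMeasurable.inner (hφ.comp_measurable measurable_fst)
        stronglyMeasurable_const).smul (hφ.comp_measurable measurable_fst)
    have hf1int : Integrable (fun w : Z × Z => φ w.2) μ :=
      Integrable.mono' (integrable_const (Real.sqrt κ)) hf1sm.aestronglyMeasurable
        (ae_of_all _ fun w => hφnorm _)
    have hf2int : Integrable (fun w : Z × Z => p w.1 • φ w.1) μ := by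
      apply Integrable.mono' (integrable_const (πB * Real.sqrt κ)) hf2sm.aestronglyMeasurable
      filter_upwards with w
      rw [norm_smul, Real.norm_eq_abs]
      exact mul_le_mul (hpB _) (hφnorm _) (norm_nonneg _) hπB0
    have hf3int : Integrable (fun w : Z × Z => (inner ℝ (φ w.1) h : ℝ) • φ w.1) μ := by
      apply Integrable.mono' (integrable_const (Real.sqrt κ * ‖h‖ * Real.sqrt κ))
        hf3sm.aestronglyMeasurable
      filter_upwards with w
      rw [norm_smul, Real.norm_eq_abs]
      have h4 : |(inner ℝ (φ w.1) h : ℝ)| ≤ Real.sqrt κ * ‖h‖ :=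
        le_trans (abs_real_inner_le_norm (φ w.1) h)
          (mul_le_mul_of_nonneg_right (hφnorm _) (norm_nonneg h))
      exact mul_le_mul h4 (hφnorm _) (norm_nonneg _) (by positivity)
    have hsplit : ∫ w, F w ∂μ
        = (∫ w, φ w.2 ∂μ) - (∫ w, p w.1 • φ w.1 ∂μ)
          - ∫ w, (inner ℝ (φ w.1) h : ℝ) • φ w.1 ∂μ := by
      have i12 : Integrable (fun w : Z × Z => φ w.2 - p w.1 • φ w.1) μ :=
        hf1int.sub hf2int
      rw [hF_def]
      rw [integral_sub i12 hf3int, integral_sub hf1int hf2int]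
    have hmap1 : ∫ w, φ w.2 ∂μ = ∫ z, φ z ∂Q := by
      have := integral_map (μ := μ) measurable_snd.aemeasurable hφ.aestronglyMeasurable
      rw [← this, hμ_def, Measure.map_snd_prod, measure_univ, one_smul]
    have hmap2 : ∫ w, p w.1 • φ w.1 ∂μ = ∫ z, p z • φ z ∂P := by
      have := integral_map (μ := μ) measurable_fst.aemeasurable
        (f := fun z => p z • φ z) (hp.stronglyMeasurable.smul hφ).aestronglyMeasurable
      rw [← this, hμ_def, Measure.map_fst_prod, measure_univ, one_smul]
    have hmap3 : ∫ w, (inner ℝ (φ w.1) h : ℝ) • φ w.1 ∂μ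
        = ∫ z, (inner ℝ (φ z) h : ℝ) • φ z ∂P := by
      have := integral_map (μ := μ) measurable_fst.aemeasurable
        (f := fun z => (inner ℝ (φ z) h : ℝ) • φ z)
        ((StronglyMeasurable.inner hφ stronglyMeasurable_const).smul hφ).aestronglyMeasurable
      rw [← this, hμ_def, Measure.map_fst_prod, measure_univ, one_smul]
    rw [hsplit, hmap1, hmap2, hmap3, ← hT h, ← hb]
    have hsol := hlsol lam hlam
    rw [← hh_def] at hsol
    rw [← hsol]
    abel
  set ξ : Z × Z → H := fun w => F w - lam • h with hξ_def
  have hξsm : StronglyMeasurable ξ := hFsm.sub stronglyMeasurable_const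
  have hξmean : ∫ w, ξ w ∂μ = 0 := by
    rw [hξ_def]
    rw [integral_sub hFint (integrable_const _), hm, integral_const, probReal_univ]
    simp
  have hlamh : ‖lam • h‖ ≤ M₀ := by
    rw [← hm]
    calc ‖∫ w, F w ∂μ‖ ≤ M₀ * (μ Set.univ).toReal :=
          norm_integral_le_of_norm_le_const (ae_of_all _ hFbd)
      _ = M₀ := by rw [measure_univ]; simp
  have hξbd : ∀ w, ‖ξ w‖ ≤ 2 * M₀ := by
    intro w
    calc ‖ξ w‖ ≤ ‖F w‖ + ‖lam • h‖ := norm_sub_le _ _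
      _ ≤ M₀ + M₀ := add_le_add (hFbd w) hlamh
      _ = 2 * M₀ := by ring
  set S : Ω → H := fun ω => ∑ i ∈ Finset.range n, ξ (W i ω) with hS_def
  set r : ℝ := C_FS η ‖h‖ * Real.sqrt n with hr_def
  -- deterministic inclusion
  have hincl : {ω | ‖S ω‖ ≤ r} ⊆ {ω : Ω | ‖hhat lam n ω - h‖
      ≤ C_FS η ‖h‖ * lam⁻¹ * (n : ℝ) ^ (-(1/2 : ℝ))} := by
    intro ω hω
    simp only [Set.mem_setOf_eq] at hω ⊢
    set v : H := hhat lam n ω - h with hv_def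
    have hnR : (0:ℝ) < n := by exact_mod_cast hn
    have hCnn : 0 ≤ C_FS η ‖h‖ := by
      rw [hC η ‖h‖]
      have h5 := hfac1
      rw [hfac_def] at h5
      nlinarith [Real.sqrt_nonneg (2 * Real.log (2 / η) * κ)]
    have hnne : ((n:ℝ))⁻¹ • ((n:ℕ) • (lam • h)) = lam • h := by
      rw [← Nat.cast_smul_eq_nsmul ℝ, smul_smul, inv_mul_cancel₀ (ne_of_gt hnR), one_smul]
    set A : H := ∑ i ∈ Finset.range n,
      (inner ℝ (φ (W i ω).1) (hhat lam n ω) : ℝ) • φ (W i ω).1 with hA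
    set A' : H := ∑ i ∈ Finset.range n,
      (inner ℝ (φ (W i ω).1) h : ℝ) • φ (W i ω).1 with hA'
    set Cs : H := ∑ i ∈ Finset.range n,
      (φ (W i ω).2 - p (W i ω).1 • φ (W i ω).1) with hCs
    have heq0 : (n:ℝ)⁻¹ • A + lam • hhat lam n ω = (n:ℝ)⁻¹ • Cs :=
      hhat_eq lam hlam n hn ω
    have hAv : ∑ i ∈ Finset.range n, (inner ℝ (φ (W i ω).1) v : ℝ) • φ (W i ω).1
        = A - A' := by
      rw [hA, hA', ← Finset.sum_sub_distrib]
      apply Finset.sum_congr rfl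
      intro i _
      rw [hv_def, inner_sub_right, sub_smul]
    have hSω : S ω = Cs - A' - (n:ℕ) • (lam • h) := by
      show (∑ i ∈ Finset.range n, ξ (W i ω)) = Cs - A' - (n:ℕ) • (lam • h)
      have e1 : ∀ i, ξ (W i ω)
          = (φ (W i ω).2 - p (W i ω).1 • φ (W i ω).1)
            - (inner ℝ (φ (W i ω).1) h : ℝ) • φ (W i ω).1 - lam • h := fun i => rfl
      calc (∑ i ∈ Finset.range n, ξ (W i ω))
          = ∑ i ∈ Finset.range n,
            ((φ (W i ω).2 - p (W i ω).1 • φ (W i ω).1)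
              - (inner ℝ (φ (W i ω).1) h : ℝ) • φ (W i ω).1 - lam • h) :=
            Finset.sum_congr rfl fun i _ => e1 i
        _ = Cs - A' - (n:ℕ) • (lam • h) := by
            rw [Finset.sum_sub_distrib, Finset.sum_sub_distrib, Finset.sum_const,
              Finset.card_range, hCs, hA']
    have key : (n:ℝ)⁻¹ • (∑ i ∈ Finset.range n,
        (inner ℝ (φ (W i ω).1) v : ℝ) • φ (W i ω).1) + lam • v = (n:ℝ)⁻¹ • S ω := by
      rw [hAv, hSω, hv_def, smul_sub, smul_sub, smul_sub, hnne, smul_sub, ← heq0]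
      abel
    have hip : lam * (‖v‖ ^ 2) ≤ (n:ℝ)⁻¹ * (r * ‖v‖) := by
      have h1 := congrArg (fun y : H => (inner ℝ y v : ℝ)) key
      simp only [inner_add_left, real_inner_smul_left, sum_inner] at h1
      have hsumnn : (0:ℝ) ≤ ∑ i ∈ Finset.range n,
          (inner ℝ (φ (W i ω).1) v : ℝ) * (inner ℝ (φ (W i ω).1) v : ℝ) :=
        Finset.sum_nonneg fun i _ => mul_self_nonneg _
      have hinner_le : (inner ℝ (S ω) v : ℝ) ≤ r * ‖v‖ :=
        le_trans (real_inner_le_norm _ _)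
          (mul_le_mul_of_nonneg_right hω (norm_nonneg v))
      have hvv : (inner ℝ v v : ℝ) = ‖v‖ ^ 2 := real_inner_self_eq_norm_sq v
      rw [hvv] at h1
      have hninv : (0:ℝ) ≤ (n:ℝ)⁻¹ := by positivity
      linarith [mul_le_mul_of_nonneg_left hinner_le hninv,
        mul_le_mul_of_nonneg_left hsumnn hninv]
    rcases eq_or_lt_of_le (norm_nonneg v) with hv0 | hvpos
    · rw [← hv0]
      exact mul_nonneg (mul_nonneg hCnn (inv_nonneg.2 hlam.le))
        (Real.rpow_nonneg (by positivity) _)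
    · have hlamv : lam * ‖v‖ ≤ (n:ℝ)⁻¹ * r := by
        apply le_of_mul_le_mul_right _ hvpos
        calc lam * ‖v‖ * ‖v‖ = lam * ‖v‖ ^ 2 := by ring
          _ ≤ (n:ℝ)⁻¹ * (r * ‖v‖) := hip
          _ = (n:ℝ)⁻¹ * r * ‖v‖ := by ring
      have h2 : ‖v‖ ≤ lam⁻¹ * ((n:ℝ)⁻¹ * r) := by
        have h3 : ‖v‖ = lam⁻¹ * (lam * ‖v‖) := by
          rw [← mul_assoc, inv_mul_cancel₀ hlam.ne', one_mul]
        rw [h3]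
        exact mul_le_mul_of_nonneg_left hlamv (inv_nonneg.2 hlam.le)
      rw [hr_def] at h2
      have hrpow : ((n:ℝ)) ^ (-(1/2:ℝ)) = (Real.sqrt n)⁻¹ := by
        rw [Real.rpow_neg (by positivity), ← Real.sqrt_eq_rpow]
      have hsq : Real.sqrt n * Real.sqrt n = (n:ℝ) := Real.mul_self_sqrt (by positivity)
      have hsqpos : 0 < Real.sqrt (n:ℝ) := Real.sqrt_pos.2 hnR
      calc ‖v‖ ≤ lam⁻¹ * ((n:ℝ)⁻¹ * (C_FS η ‖h‖ * Real.sqrt n)) := h2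
        _ = C_FS η ‖h‖ * lam⁻¹ * (Real.sqrt n)⁻¹ := by
            field_simp
            linear_combination (C_FS η ‖h‖) * hsq
        _ = C_FS η ‖h‖ * lam⁻¹ * (n:ℝ) ^ (-(1/2:ℝ)) := by rw [hrpow]
  -- probability bound
  have hprob : ENNReal.ofReal (1 - η) ≤ Prob {ω | ‖S ω‖ ≤ r} := by
    have hnR : (0:ℝ) < n := by exact_mod_cast hn
    rcases eq_or_lt_of_le hκ0 with hκz | hκpos
    · -- κ = 0 : everything degenerates
      have hφ0 : ∀ z, φ z = 0 := by
        intro z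
        have h1 := hκ z
        rw [← hκz] at h1
        exact inner_self_eq_zero.1 (le_antisymm h1 real_inner_self_nonneg)
      have hC0 : C_FS η ‖h‖ = 0 := by
        rw [hC, ← hκz]
        simp
      have hr0 : r = 0 := by rw [hr_def, hC0, zero_mul]
      have hF0 : ∀ w, F w = 0 := by
        intro w
        rw [hF_def]
        simp [hφ0]
      have hlh : lam • h = 0 := by
        rw [← hm, integral_congr_ae (ae_of_all _ hF0)]
        simp
      have hξ0 : ∀ w, ξ w = 0 := by
        intro w
        rw [hξ_def]
        simp [hF0 w, hlh]
      have huniv : {ω | ‖S ω‖ ≤ r} = Set.univ := by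
        ext ω
        simp [hS_def, hξ0, hr0]
      rw [huniv, measure_univ]
      exact ENNReal.ofReal_le_one.2 (by linarith)
    · -- κ > 0
      have hfacpos : (0:ℝ) < fac := lt_of_lt_of_le one_pos hfac1
      have hM₀pos : 0 < M₀ := mul_pos (Real.sqrt_pos.2 hκpos) hfacpos
      have hBpos : (0:ℝ) < 2 * M₀ := by linarith
      have hlog : 0 < Real.log (2 / η) := Real.log_pos (by
        rw [lt_div_iff₀ hη0]; linarith)
      have hCfac : C_FS η ‖h‖ = 2 * Real.sqrt (2 * Real.log (2 / η) * κ) * fac := by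
        rw [hC, hfac_def]
      have hCpos : 0 < C_FS η ‖h‖ := by
        rw [hCfac]
        have : 0 < Real.sqrt (2 * Real.log (2 / η) * κ) :=
          Real.sqrt_pos.2 (by positivity)
        positivity
      have hrpos : 0 < r := by
        rw [hr_def]
        exact mul_pos hCpos (Real.sqrt_pos.2 hnR)
      have hconc := aux_conc Prob W hWmeas hindep μ hdist hξsm hBpos hξbd hξmean hn hrpos
      have hval : 2 * Real.exp (-(r ^ 2) / (2 * n * (2 * M₀) ^ 2)) = η := by
        have hr2 : r ^ 2 = 4 * (2 * Real.log (2 / η) * κ) * fac ^ 2 * n := by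
          rw [hr_def, hCfac, mul_pow, mul_pow, mul_pow, Real.sq_sqrt (by positivity),
            Real.sq_sqrt hnR.le]
          ring
        have hB2 : (2 * M₀) ^ 2 = 4 * κ * fac ^ 2 := by
          rw [hM₀_def, mul_pow, mul_pow, Real.sq_sqrt hκ0]
          ring
        have hexp_eq : -(r ^ 2) / (2 * n * (2 * M₀) ^ 2) = - Real.log (2 / η) := by
          rw [hr2, hB2]
          have hκne : κ ≠ 0 := hκpos.ne'
          have hfacne : fac ≠ 0 := hfacpos.ne'
          have hnne : (n:ℝ) ≠ 0 := hnR.ne'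
          field_simp
        rw [hexp_eq, Real.exp_neg, Real.exp_log (by positivity)]
        field_simp
      have hSsm : StronglyMeasurable S :=
        Finset.stronglyMeasurable_fun_sum _ fun i _ => hξsm.comp_measurable (hWmeas i)
      have hmeasS : Measurable fun ω => ‖S ω‖ := hSsm.norm.measurable
      have hset : {ω | ‖S ω‖ ≤ r} = {ω | r < ‖S ω‖}ᶜ := by
        ext ω
        simp [not_lt]
      rw [hset, prob_compl_eq_one_sub (measurableSet_lt measurable_const hmeasS)]
      have hle : Prob {ω | r < ‖S ω‖} ≤ ENNReal.ofReal η := by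
        refine le_trans hconc ?_
        rw [hval]
      calc ENNReal.ofReal (1 - η) = 1 - ENNReal.ofReal η := by
            rw [ENNReal.ofReal_sub 1 hη0.le, ENNReal.ofReal_one]
        _ ≤ 1 - Prob {ω | r < ‖S ω‖} := tsub_le_tsub_left hle 1
  exact le_trans hprob (measure_mono hincl)
end

section
/- In the KDM sampling setup, fix n ≥ 1, λ > 0 and a realization of the samples, and let ψ₁, …, ψ_m be an orthonormal family in H spanning a subspace V with orthogonal projection P_V. Define the n×m matrices L_P and L_Q by (L_P)_{ij} := ⟨φ(z_{P,i}), ψ_j⟩_H and (L_Q)_{ij} := ⟨φ(z_{Q,i}), ψ_j⟩_H, and the vector p̂ ∈ ℝ^n by p̂_i := p(z_{P,i}). Then the m×m matrix L_Pᵀ L_P + nλ·I_m is invertible, and the low-rank estimator h̃_{λ,n}, i.e. the unique solution of (P_V ∘ T̂_n ∘ P_V + λ·id) h̃_{λ,n} = P_V b̂_n, equals h̃_{λ,n} = Σ_{j=1}^m β_j ψ_j with coordinate vector β = (L_Pᵀ L_P + nλ·I_m)⁻¹ (L_Qᵀ 𝟙_n − L_Pᵀ p̂), where 𝟙_n ∈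 ℝ^n is the all-ones vector. -/
open MeasureTheory

/-- (Coordinates of the low-rank estimator.)  In the KDM sampling setup,
given a sample realization, an orthonormal family `ψ₁,…,ψ_m` spanning `V` with orthogonal
projection `P_V`, and the matrices `(L_P)_{ij} = ⟨φ(z_{P,i}), ψ_j⟩`,
`(L_Q)_{ij} = ⟨φ(z_{Q,i}), ψ_j⟩`, the matrix `L_Pᵀ L_P + nλ I` is invertible and the
low-rank estimator `h̃` (unique solution of `(P_V T̂_n P_V + λ id) h̃ = P_V b̂_n`) equals
`Σⱼ βⱼ ψⱼ` with `β = (L_Pᵀ L_P + nλ I)⁻¹ (L_Qᵀ 𝟙 − L_Pᵀ p̂)`. -/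
theorem kdm_lowrank_coordinates
    {Z : Type*} [MeasurableSpace Z]
    (P Q : Measure Z) [IsProbabilityMeasure P] [IsProbabilityMeasure Q]
    (hQP : Q ≪ P)
    (hg2 : Integrable (fun z => ((Q.rnDeriv P z).toReal) ^ 2) P)
    {H : Type*} [NormedAddCommGroup H] [InnerProductSpace ℝ H] [CompleteSpace H]
    [TopologicalSpace.SeparableSpace H]
    (φ : Z → H) (hφ : StronglyMeasurable φ)
    (κ : ℝ) (hκ : ∀ z, (inner ℝ (φ z) (φ z) : ℝ) ≤ κ)
    (p : Z → ℝ) (hp : Measurable p) (πB : ℝ) (hpB : ∀ z, |p z| ≤ πB)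
    -- the sample realization
    (n : ℕ) (hn : 1 ≤ n) (lam : ℝ) (hlam : 0 < lam)
    (zP zQ : Fin n → Z)
    -- the orthonormal family, its span V, and the orthogonal projection onto V
    (m : ℕ) (ψ : Fin m → H) (hψ : Orthonormal ℝ ψ)
    (Pv : H →L[ℝ] H)
    (hPv : ∀ h : H, Pv h ∈ Submodule.span ℝ (Set.range ψ) ∧
      h - Pv h ∈ (Submodule.span ℝ (Set.range ψ))ᗮ)
    -- the matrices L_P, L_Q
    (LP LQ : Matrix (Fin n) (Fin m) ℝ)
    (hLP : ∀ i j, LP i j = (inner ℝ (φ (zP i)) (ψ j) : ℝ))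
    (hLQ : ∀ i j, LQ i j = (inner ℝ (φ (zQ i)) (ψ j) : ℝ))
    -- the low-rank estimator
    (ht : H)
    (hteq : Pv ((n : ℝ)⁻¹ • ∑ i, (inner ℝ (φ (zP i)) (Pv ht) : ℝ) • φ (zP i))
        + lam • ht
      = Pv ((n : ℝ)⁻¹ • ∑ i, (φ (zQ i) - p (zP i) • φ (zP i)))) :
    IsUnit (LP.transpose * LP + ((n : ℝ) * lam) • (1 : Matrix (Fin m) (Fin m) ℝ)) ∧
    ht = ∑ j, ((LP.transpose * LP + ((n : ℝ) * lam) • (1 : Matrix (Fin m) (Fin m) ℝ))⁻¹.mulVec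
        (LQ.transpose.mulVec (fun _ => (1 : ℝ)) - LP.transpose.mulVec (fun i => p (zP i)))) j
      • ψ j := by
  classical
  set K := Submodule.span ℝ (Set.range ψ) with hKdef
  set A := LP.transpose * LP + ((n : ℝ) * lam) • (1 : Matrix (Fin m) (Fin m) ℝ) with hAdef
  have hnR : (0:ℝ) < (n:ℝ) := by exact_mod_cast hn
  -- invertibility
  have hAunit : IsUnit A := by
    have h1 : (LP.transpose * LP).PosSemidef := by
      rw [← LP.conjTranspose_eq_transpose_of_trivial]
      exact Matrix.posSemidef_conjTranspose_mul_self LP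
    have h2 : (((n:ℝ) * lam) • (1 : Matrix (Fin m) (Fin m) ℝ)).PosDef := by
      refine Matrix.posDef_iff_dotProduct_mulVec.mpr ⟨by simp [Matrix.IsHermitian], fun x hx => ?_⟩
      rw [Matrix.smul_mulVec, Matrix.one_mulVec]
      have h3 : dotProduct (star x) (((n:ℝ)*lam) • x)
          = ((n:ℝ)*lam) * dotProduct (star x) x := by
        simp [dotProduct_smul]
      rw [h3]
      exact mul_pos (mul_pos hnR hlam) (Matrix.dotProduct_star_self_pos_iff.mpr hx)
    exact (Matrix.PosDef.posSemidef_add h1 h2).isUnit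
  refine ⟨hAunit, ?_⟩
  -- basic projection facts
  have hmemK : ∀ j, ψ j ∈ K := fun j => Submodule.subset_span ⟨j, rfl⟩
  have hzero : ∀ x, x ∈ K → x ∈ Kᗮ → x = 0 := fun x hx hx' =>
    inner_self_eq_zero.mp ((Submodule.mem_orthogonal K x).mp hx' x hx)
  have hPvfix : ∀ x, x ∈ K → Pv x = x := fun x hx => by
    have h := hzero (x - Pv x) (Submodule.sub_mem K hx (hPv x).1) (hPv x).2
    have := sub_eq_zero.mp h
    exact this.symm
  have hPvinner : ∀ x (j : Fin m), (inner ℝ (ψ j) (Pv x) : ℝ) = inner ℝ (ψ j) x := fun x j => by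
    have h0 : (inner ℝ (ψ j) (x - Pv x) : ℝ) =
        0 := (Submodule.mem_orthogonal K (x - Pv x)).mp (hPv x).2 (ψ j) (hmemK j)
    rw [inner_sub_right] at h0
    linarith
  -- ht ∈ K
  have htK : ht ∈ K := by
    have h1 : lam • ht
        = Pv ((n : ℝ)⁻¹ • ∑ i, (φ (zQ i) - p (zP i) • φ (zP i)))
          - Pv ((n : ℝ)⁻¹ • ∑ i, (inner ℝ (φ (zP i)) (Pv ht) : ℝ) • φ (zP i)) := by
      rw [← hteq]; abel
    have h2 : lam • ht ∈ K := h1 ▸ Submodule.sub_mem K (hPv _).1 (hPv _).1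
    have h3 : lam⁻¹ • (lam • ht) ∈ K := Submodule.smul_mem K _ h2
    rwa [smul_smul, inv_mul_cancel₀ hlam.ne', one_smul] at h3
  have hPvht : Pv ht = ht := hPvfix ht htK
  -- coordinates
  obtain ⟨c, hc⟩ := (Submodule.mem_span_range_iff_exists_fun ℝ).mp htK
  -- inner products with ht
  have hinφ : ∀ i, (inner ℝ (φ (zP i)) ht : ℝ) = LP.mulVec c i := fun i => by
    rw [← hc, inner_sum]
    simp only [real_inner_smul_right, Matrix.mulVec, dotProduct]
    exact Finset.sum_congr rfl fun k _ => by rw [hLP]; ring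
  have hinψ : ∀ j, (inner ℝ (ψ j) ht : ℝ) = c j := fun j => by
    rw [← hc]; exact hψ.inner_right_fintype c j
  -- scalar equation
  have key : ∀ j, A.mulVec c j
      = (LQ.transpose.mulVec (fun _ => (1 : ℝ)) - LP.transpose.mulVec (fun i => p (zP i))) j := by
    intro j
    have h := congrArg (fun x : H => (inner ℝ (ψ j) x : ℝ)) hteq
    simp only [inner_add_right, real_inner_smul_right, hPvinner, hPvht, inner_sum,
      inner_sub_right, hinψ] at h
    -- h : n⁻¹ * (∑ i, inner ℝ (φ zP i) ht * inner ℝ (ψ j) (φ zP i)) + lam * c j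
    --   = n⁻¹ * ∑ i, (inner ℝ (ψ j) (φ zQ i) - p (zP i) * inner ℝ (ψ j) (φ zP i))
    have hcomm : ∀ i, (inner ℝ (ψ j) (φ (zP i)) : ℝ) = LP i j := fun i => by
      rw [hLP, real_inner_comm]
    have hcommQ : ∀ i, (inner ℝ (ψ j) (φ (zQ i)) : ℝ) = LQ i j := fun i => by
      rw [hLQ, real_inner_comm]
    simp only [hinφ, hcomm, hcommQ] at h
    have h' : (∑ i, LP.mulVec c i * LP i j) + (n:ℝ) * lam * c j
        = ∑ i, (LQ i j - p (zP i) * LP i j) := by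
      have := congrArg (fun t => (n:ℝ) * t) h
      simp only [mul_add, ← mul_assoc, mul_inv_cancel₀ hnR.ne'] at this
      linarith [this]
    have hT : ∀ (w : Fin n → ℝ), (LP.transpose.mulVec w) j = ∑ i, LP i j * w i := fun w => by
      simp [Matrix.mulVec, dotProduct, Matrix.transpose_apply]
    have hTQ : (LQ.transpose.mulVec (fun _ => (1:ℝ))) j = ∑ i, LQ i j * 1 := by
      simp [Matrix.mulVec, dotProduct, Matrix.transpose_apply]
    have hgoal : A.mulVec c j
        = (LP.transpose.mulVec (LP.mulVec c)) j + (n:ℝ) * lam * c j := by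
      rw [hAdef, Matrix.add_mulVec, Matrix.smul_mulVec, Matrix.one_mulVec,
        ← Matrix.mulVec_mulVec]
      simp [Pi.add_apply, Pi.smul_apply, mul_assoc]
    rw [hgoal, Pi.sub_apply, hT (LP.mulVec c), hT (fun i => p (zP i)), hTQ]
    rw [Finset.sum_sub_distrib] at h'
    calc (∑ i, LP i j * LP.mulVec c i) + (n:ℝ) * lam * c j
        = (∑ i, LP.mulVec c i * LP i j) + (n:ℝ) * lam * c j := by
          congr 1; exact Finset.sum_congr rfl fun i _ => mul_comm _ _
      _ = ∑ i, LQ i j - ∑ i, p (zP i) * LP i j := h'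
      _ = (∑ i, LQ i j * 1) - ∑ i, LP i j * p (zP i) := by
          congr 1
          · exact Finset.sum_congr rfl fun i _ => (mul_one _).symm
          · exact Finset.sum_congr rfl fun i _ => mul_comm _ _
  -- conclude
  have hcvec : c = A⁻¹.mulVec
      (LQ.transpose.mulVec (fun _ => (1 : ℝ)) - LP.transpose.mulVec (fun i => p (zP i))) := by
    have := congrArg (A⁻¹.mulVec) (funext key)
    rwa [Matrix.mulVec_mulVec, Matrix.nonsing_inv_mul A ((Matrix.isUnit_iff_isUnit_det A).mp hAunit),
      Matrix.one_mulVec] at this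
  rw [← hc, ← hcvec]
end

section
/- In the KDM sampling setup, fix n ≥ 1, λ > 0, ε ≥ 0 and a realization of the samples. Let V ⊆ H be a closed subspace with orthogonal projection P_V that is ε-accurate, i.e. Σ_{i=1}^n (‖φ(z_{P,i}) − P_V φ(z_{P,i})‖_H² + ‖φ(z_{Q,i}) − P_V φ(z_{Q,i})‖_H²) ≤ ε. Let ĥ_{λ,n} be the unique solution of (T̂_n + λ·id) ĥ = b̂_n and h̃_{λ,n} the unique solution of (P_V ∘ T̂_n ∘ P_V + λ·id) h̃ = P_V b̂_n. Then the low-rank approximation error is bounded by ‖ĥ_{λ,n} − h̃_{λ,n}‖_H ≤ n^{-1/2} · λ⁻¹ · C_AE(ε, λ), where C_AE(ε, λ) := √ε · (1 + λ^{-1/2}·√κ∞) · (π∞ + 1). -/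
open MeasureTheory

open Finset in
private lemma kdm_sum_le_sqrt_aux {n : ℕ} (f : Fin n → ℝ) (hf : ∀ i, 0 ≤ f i) (eps : ℝ)
    (h : ∑ i, f i ^ 2 ≤ eps) : ∑ i, f i ≤ Real.sqrt eps * Real.sqrt n := by
  have h1 := Real.sum_mul_le_sqrt_mul_sqrt Finset.univ f (fun _ => 1)
  simp only [mul_one, one_pow, Finset.sum_const, Finset.card_univ, Fintype.card_fin,
    nsmul_eq_mul] at h1
  calc ∑ i, f i ≤ Real.sqrt (∑ i, f i ^ 2) * Real.sqrt ((n:ℝ) * 1) := by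
        simpa using h1
    _ ≤ Real.sqrt eps * Real.sqrt n := by
        rw [mul_one]
        exact mul_le_mul_of_nonneg_right (Real.sqrt_le_sqrt h) (Real.sqrt_nonneg _)

set_option maxHeartbeats 2000000

/-- (Low-rank approximation error bound.)  In the KDM sampling setup,
for a realized sample and an `ε`-accurate closed subspace `V` with orthogonal projection
`P_V`, the full-rank estimator `ĥ` (solving `(T̂_n + λ id) ĥ = b̂_n`) and the low-rank
estimator `h̃` (solving `(P_V T̂_n P_V + λ id) h̃ = P_V b̂_n`) satisfy
`‖ĥ − h̃‖ ≤ n^{-1/2} λ⁻¹ C_AE(ε,λ)` with `C_AE(ε,λ) = √ε (1 + λ^{-1/2} √κ∞)(π∞ + 1)`. -/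
theorem kdm_lowrank_approximation_error
    {Z : Type*} [MeasurableSpace Z]
    (P Q : Measure Z) [IsProbabilityMeasure P] [IsProbabilityMeasure Q]
    (hQP : Q ≪ P)
    (hg2 : Integrable (fun z => ((Q.rnDeriv P z).toReal) ^ 2) P)
    {H : Type*} [NormedAddCommGroup H] [InnerProductSpace ℝ H] [CompleteSpace H]
    [TopologicalSpace.SeparableSpace H]
    (φ : Z → H) (hφ : StronglyMeasurable φ)
    (κ : ℝ) (hκ : ∀ z, (inner ℝ (φ z) (φ z) : ℝ) ≤ κ)
    (p : Z → ℝ) (hp : Measurable p) (πB : ℝ) (hpB : ∀ z, |p z| ≤ πB)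
    -- the sample realization
    (n : ℕ) (hn : 1 ≤ n) (lam : ℝ) (hlam : 0 < lam) (eps : ℝ) (heps : 0 ≤ eps)
    (zP zQ : Fin n → Z)
    -- the closed subspace V with orthogonal projection P_V
    (V : Submodule ℝ H) (hVclosed : IsClosed (V : Set H))
    (Pv : H →L[ℝ] H)
    (hPv : ∀ h : H, Pv h ∈ V ∧ h - Pv h ∈ Vᗮ)
    -- ε-accuracy of V for the realized sample
    (hacc : ∑ i, (‖φ (zP i) - Pv (φ (zP i))‖ ^ 2 + ‖φ (zQ i) - Pv (φ (zQ i))‖ ^ 2) ≤ eps)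
    -- the full-rank sample estimator
    (hhat : H)
    (hhat_eq : (n : ℝ)⁻¹ • (∑ i, (inner ℝ (φ (zP i)) hhat : ℝ) • φ (zP i)) + lam • hhat
      = (n : ℝ)⁻¹ • ∑ i, (φ (zQ i) - p (zP i) • φ (zP i)))
    -- the low-rank sample estimator
    (ht : H)
    (ht_eq : Pv ((n : ℝ)⁻¹ • ∑ i, (inner ℝ (φ (zP i)) (Pv ht) : ℝ) • φ (zP i)) + lam • ht
      = Pv ((n : ℝ)⁻¹ • ∑ i, (φ (zQ i) - p (zP i) • φ (zP i)))) :
    ‖hhat - ht‖ ≤ (n : ℝ) ^ (-(1/2 : ℝ)) * lam⁻¹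
      * (Real.sqrt eps * (1 + lam ^ (-(1/2 : ℝ)) * Real.sqrt κ) * (πB + 1)) := by
  classical
  have hn' : (0:ℝ) < (n:ℝ) := by exact_mod_cast hn
  have hκ0 : (0:ℝ) ≤ κ := le_trans real_inner_self_nonneg (hκ (zP ⟨0, hn⟩))
  have hπ0 : (0:ℝ) ≤ πB := le_trans (abs_nonneg _) (hpB (zP ⟨0, hn⟩))
  set ψ : Fin n → H := fun i => φ (zP i) with hψdef
  set χ : Fin n → H := fun i => φ (zQ i) with hχdef
  set b : H := (n : ℝ)⁻¹ • ∑ i, (χ i - p (zP i) • ψ i) with hbdef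
  set T : H → H := fun h => (n : ℝ)⁻¹ • ∑ i, (inner ℝ (ψ i) h : ℝ) • ψ i with hTdef
  -- projection facts
  have hPv_mem : ∀ h : H, Pv h ∈ V := fun h => (hPv h).1
  have hPv_fix : ∀ v ∈ V, Pv v = v := by
    intro v hv
    have h1 : v - Pv v ∈ V := V.sub_mem hv (hPv_mem v)
    have h2 : (inner ℝ (v - Pv v) (v - Pv v) : ℝ) = 0 :=
      Submodule.inner_right_of_mem_orthogonal h1 (hPv v).2
    have := inner_self_eq_zero.mp h2
    rw [sub_eq_zero] at this
    exact this.symm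
  have htfix : Pv ht = ht := by
    have hsub : lam • ht = Pv b - Pv (T (Pv ht)) := eq_sub_of_add_eq' ht_eq
    have hmem : lam • ht ∈ V := by rw [hsub]; exact V.sub_mem (hPv_mem _) (hPv_mem _)
    have h2 : ht ∈ V := by
      have := V.smul_mem lam⁻¹ hmem
      rwa [smul_smul, inv_mul_cancel₀ hlam.ne', one_smul] at this
    exact hPv_fix ht h2
  have hPv_sa : ∀ x y : H, (inner ℝ (Pv x) y : ℝ) = inner ℝ x (Pv y) := by
    intro x y
    have e1 : (inner ℝ (Pv x) (y - Pv y) : ℝ) = 0 :=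
      Submodule.inner_right_of_mem_orthogonal (hPv_mem x) (hPv y).2
    have e2 : (inner ℝ (Pv y) (x - Pv x) : ℝ) = 0 :=
      Submodule.inner_right_of_mem_orthogonal (hPv_mem y) (hPv x).2
    rw [inner_sub_right, sub_eq_zero] at e1 e2
    linarith [e1, e2, real_inner_comm x (Pv y), real_inner_comm (Pv x) (Pv y)]
  -- T facts
  have Tinner : ∀ h : H, (inner ℝ (T h) h : ℝ) = (n:ℝ)⁻¹ * ∑ i, (inner ℝ (ψ i) h : ℝ)^2 := by
    intro h
    simp only [hTdef, real_inner_smul_left, sum_inner, sq]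
  have Tpos : ∀ h : H, 0 ≤ (inner ℝ (T h) h : ℝ) := by
    intro h
    rw [Tinner]
    positivity
  have Tlin : T (hhat - ht) = T hhat - T ht := by
    simp only [hTdef, inner_sub_right, sub_smul, Finset.sum_sub_distrib, smul_sub]
  -- rewritten estimator equations
  have h1 : T hhat + lam • hhat = b := hhat_eq
  have h2 : Pv (T ht) + lam • ht = Pv b := by rw [htfix] at ht_eq; exact ht_eq
  set d : H := hhat - ht with hddef
  set r : H := (b - T ht) - Pv (b - T ht) with hrdef
  have key : T d + lam • d = r := by
    have hsub : lam • ht = Pv b - Pv (T ht) := eq_sub_of_add_eq' h2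
    rw [hrdef, hddef, Tlin, smul_sub, hsub, map_sub, ← h1]
    abel
  -- ‖d‖ ≤ lam⁻¹ ‖r‖
  have hdel : ‖d‖ ≤ lam⁻¹ * ‖r‖ := by
    have h3 : (inner ℝ (lam • d) d : ℝ) = lam * ‖d‖^2 := by
      rw [real_inner_smul_left, real_inner_self_eq_norm_sq]
    have hip : lam * ‖d‖^2 ≤ (inner ℝ r d : ℝ) := by
      rw [← key, inner_add_left, h3]
      linarith [Tpos d]
    have hrd : (inner ℝ r d : ℝ) ≤ ‖r‖ * ‖d‖ := real_inner_le_norm r d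
    rcases eq_or_lt_of_le (norm_nonneg d) with h0 | h0
    · rw [← h0]
      have : (0:ℝ) ≤ ‖r‖ := norm_nonneg r
      positivity
    · have h4 : lam * ‖d‖ ≤ ‖r‖ := by nlinarith
      calc ‖d‖ = lam⁻¹ * (lam * ‖d‖) := by field_simp
        _ ≤ lam⁻¹ * ‖r‖ := mul_le_mul_of_nonneg_left h4 (by positivity)
  -- bound on ‖b‖
  have hφn : ∀ z, ‖φ z‖ ≤ Real.sqrt κ := by
    intro z
    have h5 := hκ z
    rw [real_inner_self_eq_norm_sq] at h5
    have := Real.sqrt_le_sqrt h5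
    rwa [Real.sqrt_sq (norm_nonneg _)] at this
  have hbnorm : ‖b‖ ≤ Real.sqrt κ * (1 + πB) := by
    have h6 : ∀ i : Fin n, ‖χ i - p (zP i) • ψ i‖ ≤ Real.sqrt κ * (1 + πB) := by
      intro i
      calc ‖χ i - p (zP i) • ψ i‖ ≤ ‖χ i‖ + ‖p (zP i) • ψ i‖ := norm_sub_le _ _
        _ = ‖χ i‖ + |p (zP i)| * ‖ψ i‖ := by rw [norm_smul, Real.norm_eq_abs]
        _ ≤ Real.sqrt κ + πB * Real.sqrt κ := by
            have := hφn (zQ i); have := hφn (zP i); have := hpB (zP i)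
            have := abs_nonneg (p (zP i))
            nlinarith [Real.sqrt_nonneg κ]
        _ = Real.sqrt κ * (1 + πB) := by ring
    calc ‖b‖ ≤ (n:ℝ)⁻¹ * ‖∑ i, (χ i - p (zP i) • ψ i)‖ := by
          rw [hbdef, norm_smul, Real.norm_eq_abs, abs_of_nonneg (by positivity)]
      _ ≤ (n:ℝ)⁻¹ * ∑ i, ‖χ i - p (zP i) • ψ i‖ := by
          apply mul_le_mul_of_nonneg_left (norm_sum_le _ _) (by positivity)
      _ ≤ (n:ℝ)⁻¹ * ∑ _i : Fin n, Real.sqrt κ * (1 + πB) := by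
          apply mul_le_mul_of_nonneg_left (Finset.sum_le_sum (fun i _ => h6 i)) (by positivity)
      _ = Real.sqrt κ * (1 + πB) := by
          rw [Finset.sum_const, Finset.card_univ, Fintype.card_fin, nsmul_eq_mul]
          field_simp
  -- bounds on ht
  have hFa : (inner ℝ (T ht) ht : ℝ) + lam * ‖ht‖^2 = inner ℝ b ht := by
    have h7 : (inner ℝ (Pv (T ht) + lam • ht) ht : ℝ) = inner ℝ (Pv b) ht := by rw [h2]
    rw [inner_add_left, real_inner_smul_left, real_inner_self_eq_norm_sq,
      hPv_sa, hPv_sa, htfix] at h7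
    rw [real_inner_comm] at h7 ⊢
    exact h7
  have hbt : (inner ℝ b ht : ℝ) ≤ ‖b‖ * ‖ht‖ := real_inner_le_norm b ht
  have hht_norm : ‖ht‖ ≤ lam⁻¹ * ‖b‖ := by
    rcases eq_or_lt_of_le (norm_nonneg ht) with h0 | h0
    · rw [← h0]
      have : (0:ℝ) ≤ ‖b‖ := norm_nonneg b
      positivity
    · have h8 : lam * ‖ht‖ ≤ ‖b‖ := by nlinarith [Tpos ht]
      calc ‖ht‖ = lam⁻¹ * (lam * ‖ht‖) := by field_simp
        _ ≤ lam⁻¹ * ‖b‖ := mul_le_mul_of_nonneg_left h8 (by positivity)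
  have hTht : (inner ℝ (T ht) ht : ℝ) ≤ lam⁻¹ * ‖b‖^2 := by
    have h9 : (inner ℝ (T ht) ht : ℝ) ≤ ‖b‖ * ‖ht‖ := by nlinarith [norm_nonneg ht]
    calc (inner ℝ (T ht) ht : ℝ) ≤ ‖b‖ * (lam⁻¹ * ‖b‖) :=
          h9.trans (mul_le_mul_of_nonneg_left hht_norm (norm_nonneg b))
      _ = lam⁻¹ * ‖b‖^2 := by ring
  
  -- epsilon-accuracy splits
  have haε : ∑ i, ‖ψ i - Pv (ψ i)‖ ^ 2 ≤ eps := by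
    refine le_trans (Finset.sum_le_sum (fun i (_ : i ∈ Finset.univ) => ?_)) hacc
    have := sq_nonneg ‖χ i - Pv (χ i)‖
    linarith
  have hcε : ∑ i, ‖χ i - Pv (χ i)‖ ^ 2 ≤ eps := by
    refine le_trans (Finset.sum_le_sum (fun i (_ : i ∈ Finset.univ) => ?_)) hacc
    have := sq_nonneg ‖ψ i - Pv (ψ i)‖
    linarith
  -- pointwise bound on summand of r
  have hrbound : ‖r‖ ≤ (n:ℝ)⁻¹ * ∑ i,
      (‖χ i - Pv (χ i)‖ + (|p (zP i)| + |(inner ℝ (ψ i) ht : ℝ)|) * ‖ψ i - Pv (ψ i)‖) := by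
    have hu : b - T ht
        = (n:ℝ)⁻¹ • ∑ i, (χ i - p (zP i) • ψ i - (inner ℝ (ψ i) ht : ℝ) • ψ i) := by
      rw [hbdef]
      show _ - (n:ℝ)⁻¹ • ∑ i, (inner ℝ (ψ i) ht : ℝ) • ψ i = _
      rw [← smul_sub, ← Finset.sum_sub_distrib]
    have hr2 : r = (n:ℝ)⁻¹ • ∑ i,
        ((χ i - p (zP i) • ψ i - (inner ℝ (ψ i) ht : ℝ) • ψ i)
          - Pv (χ i - p (zP i) • ψ i - (inner ℝ (ψ i) ht : ℝ) • ψ i)) := by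
      rw [hrdef, hu, _root_.map_smul, ← smul_sub, map_sum, ← Finset.sum_sub_distrib]
    rw [hr2, norm_smul, Real.norm_eq_abs, abs_of_nonneg (by positivity)]
    refine mul_le_mul_of_nonneg_left ((norm_sum_le _ _).trans
      (Finset.sum_le_sum (fun i _ => ?_))) (by positivity)
    have hei : (χ i - p (zP i) • ψ i - (inner ℝ (ψ i) ht : ℝ) • ψ i)
        - Pv (χ i - p (zP i) • ψ i - (inner ℝ (ψ i) ht : ℝ) • ψ i)
        = (χ i - Pv (χ i)) - p (zP i) • (ψ i - Pv (ψ i))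
          - (inner ℝ (ψ i) ht : ℝ) • (ψ i - Pv (ψ i)) := by
      rw [map_sub, map_sub, _root_.map_smul, _root_.map_smul, smul_sub, smul_sub]
      abel
    rw [hei]
    calc ‖(χ i - Pv (χ i)) - p (zP i) • (ψ i - Pv (ψ i))
          - (inner ℝ (ψ i) ht : ℝ) • (ψ i - Pv (ψ i))‖
        ≤ ‖(χ i - Pv (χ i)) - p (zP i) • (ψ i - Pv (ψ i))‖
          + ‖(inner ℝ (ψ i) ht : ℝ) • (ψ i - Pv (ψ i))‖ := norm_sub_le _ _
      _ ≤ ‖χ i - Pv (χ i)‖ + ‖p (zP i) • (ψ i - Pv (ψ i))‖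
          + ‖(inner ℝ (ψ i) ht : ℝ) • (ψ i - Pv (ψ i))‖ := by
          linarith [norm_sub_le (χ i - Pv (χ i)) (p (zP i) • (ψ i - Pv (ψ i)))]
      _ = ‖χ i - Pv (χ i)‖
          + (|p (zP i)| + |(inner ℝ (ψ i) ht : ℝ)|) * ‖ψ i - Pv (ψ i)‖ := by
          rw [norm_smul, norm_smul, Real.norm_eq_abs, Real.norm_eq_abs]
          ring
  -- the three sums
  have hS1 : ∑ i, ‖χ i - Pv (χ i)‖ ≤ Real.sqrt eps * Real.sqrt n :=
    kdm_sum_le_sqrt_aux _ (fun i => norm_nonneg _) eps hcε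
  have hSa : ∑ i, ‖ψ i - Pv (ψ i)‖ ≤ Real.sqrt eps * Real.sqrt n :=
    kdm_sum_le_sqrt_aux _ (fun i => norm_nonneg _) eps haε
  have hS2 : ∑ i, |p (zP i)| * ‖ψ i - Pv (ψ i)‖ ≤ πB * (Real.sqrt eps * Real.sqrt n) := by
    calc ∑ i, |p (zP i)| * ‖ψ i - Pv (ψ i)‖ ≤ ∑ i, πB * ‖ψ i - Pv (ψ i)‖ :=
          Finset.sum_le_sum (fun i _ =>
            mul_le_mul_of_nonneg_right (hpB (zP i)) (norm_nonneg _))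
      _ = πB * ∑ i, ‖ψ i - Pv (ψ i)‖ := by rw [Finset.mul_sum]
      _ ≤ πB * (Real.sqrt eps * Real.sqrt n) := mul_le_mul_of_nonneg_left hSa hπ0
  have hS3 : ∑ i, |(inner ℝ (ψ i) ht : ℝ)| * ‖ψ i - Pv (ψ i)‖
      ≤ (Real.sqrt n * Real.sqrt lam⁻¹ * ‖b‖) * Real.sqrt eps := by
    have h12 := Real.sum_mul_le_sqrt_mul_sqrt Finset.univ
      (fun i => |(inner ℝ (ψ i) ht : ℝ)|) (fun i => ‖ψ i - Pv (ψ i)‖)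
    simp only [sq_abs] at h12
    have h10 : ∑ i, (inner ℝ (ψ i) ht : ℝ)^2 ≤ (n:ℝ) * (lam⁻¹ * ‖b‖^2) := by
      have h11 : ∑ i, (inner ℝ (ψ i) ht : ℝ)^2 = (n:ℝ) * (inner ℝ (T ht) ht : ℝ) := by
        rw [Tinner ht]
        field_simp
      rw [h11]
      exact mul_le_mul_of_nonneg_left hTht hn'.le
    have h13 : Real.sqrt (∑ i, (inner ℝ (ψ i) ht : ℝ)^2)
        ≤ Real.sqrt n * Real.sqrt lam⁻¹ * ‖b‖ := by
      calc Real.sqrt (∑ i, (inner ℝ (ψ i) ht : ℝ)^2)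
          ≤ Real.sqrt ((n:ℝ) * (lam⁻¹ * ‖b‖^2)) := Real.sqrt_le_sqrt h10
        _ = Real.sqrt n * Real.sqrt lam⁻¹ * ‖b‖ := by
            rw [Real.sqrt_mul hn'.le, Real.sqrt_mul (by positivity),
              Real.sqrt_sq (norm_nonneg b), mul_assoc]
    calc ∑ i, |(inner ℝ (ψ i) ht : ℝ)| * ‖ψ i - Pv (ψ i)‖
        ≤ Real.sqrt (∑ i, (inner ℝ (ψ i) ht : ℝ)^2)
          * Real.sqrt (∑ i, ‖ψ i - Pv (ψ i)‖^2) := h12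
      _ ≤ (Real.sqrt n * Real.sqrt lam⁻¹ * ‖b‖) * Real.sqrt eps :=
          mul_le_mul h13 (Real.sqrt_le_sqrt haε) (Real.sqrt_nonneg _)
            (by positivity)
  -- combine
  have hsumtotal : ∑ i, (‖χ i - Pv (χ i)‖
        + (|p (zP i)| + |(inner ℝ (ψ i) ht : ℝ)|) * ‖ψ i - Pv (ψ i)‖)
      ≤ Real.sqrt n * Real.sqrt eps * ((1 + πB) * (1 + Real.sqrt lam⁻¹ * Real.sqrt κ)) := by
    have hsplit : ∑ i, (‖χ i - Pv (χ i)‖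
          + (|p (zP i)| + |(inner ℝ (ψ i) ht : ℝ)|) * ‖ψ i - Pv (ψ i)‖)
        = ∑ i, ‖χ i - Pv (χ i)‖ + ∑ i, |p (zP i)| * ‖ψ i - Pv (ψ i)‖
          + ∑ i, |(inner ℝ (ψ i) ht : ℝ)| * ‖ψ i - Pv (ψ i)‖ := by
      rw [← Finset.sum_add_distrib, ← Finset.sum_add_distrib]
      exact Finset.sum_congr rfl (fun i _ => by ring)
    rw [hsplit]
    have hb2 : (Real.sqrt n * Real.sqrt lam⁻¹ * ‖b‖) * Real.sqrt eps
        ≤ Real.sqrt n * Real.sqrt eps * (Real.sqrt lam⁻¹ * (Real.sqrt κ * (1 + πB))) := by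
      have := mul_le_mul_of_nonneg_left hbnorm
        (mul_nonneg (mul_nonneg (Real.sqrt_nonneg (n:ℝ)) (Real.sqrt_nonneg lam⁻¹))
          (Real.sqrt_nonneg eps))
      nlinarith [Real.sqrt_nonneg (n:ℝ), Real.sqrt_nonneg lam⁻¹, Real.sqrt_nonneg eps,
        Real.sqrt_nonneg κ]
    nlinarith [hS1, hS2, hS3, hb2]
  -- final assembly
  have hfinal : ‖d‖ ≤ lam⁻¹ * ((n:ℝ)⁻¹ *
      (Real.sqrt n * Real.sqrt eps * ((1 + πB) * (1 + Real.sqrt lam⁻¹ * Real.sqrt κ)))) := by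
    refine hdel.trans (mul_le_mul_of_nonneg_left ?_ (by positivity))
    exact hrbound.trans (mul_le_mul_of_nonneg_left hsumtotal (by positivity))
  have hn12 : (n:ℝ)⁻¹ * Real.sqrt n = (n:ℝ) ^ (-(1/2 : ℝ)) := by
    rw [Real.rpow_neg hn'.le, ← Real.sqrt_eq_rpow]
    have hs : Real.sqrt n * Real.sqrt n = (n:ℝ) := Real.mul_self_sqrt hn'.le
    have hs0 : (0:ℝ) < Real.sqrt n := Real.sqrt_pos.mpr hn'
    field_simp
    exact Real.sq_sqrt hn'.le
  have hl12 : Real.sqrt lam⁻¹ = lam ^ (-(1/2 : ℝ)) := by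
    rw [Real.rpow_neg hlam.le, ← Real.sqrt_eq_rpow, Real.sqrt_inv]
  show ‖d‖ ≤ _
  calc ‖d‖ ≤ lam⁻¹ * ((n:ℝ)⁻¹ *
        (Real.sqrt n * Real.sqrt eps * ((1 + πB) * (1 + Real.sqrt lam⁻¹ * Real.sqrt κ)))) :=
        hfinal
    _ = ((n:ℝ)⁻¹ * Real.sqrt n) * lam⁻¹
        * (Real.sqrt eps * (1 + Real.sqrt lam⁻¹ * Real.sqrt κ) * (πB + 1)) := by ring
    _ = (n : ℝ) ^ (-(1/2 : ℝ)) * lam⁻¹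
        * (Real.sqrt eps * (1 + lam ^ (-(1/2 : ℝ)) * Real.sqrt κ) * (πB + 1)) := by
        rw [hn12, hl12]
end

section
/- In the KDM setup, assume the kernel is universal, i.e. the set of P-a.e.-equivalence classes of the functions z ↦ ⟨φ z, h⟩_H, h ∈ H, is dense in L²(P). Then the null hypothesis g = p P-almost everywhere holds if and only if h_λ = 0 for every λ > 0, where h_λ is the unique solution of (T + λ·id) h_λ = b. -/
open MeasureTheory

section Aux

variable {H : Type*} [NormedAddCommGroup H] [InnerProductSpace ℝ H]

/-- The continuous bilinear form `(u, v) ↦ ⟪S u, v⟫` attached to an operator `S`. -/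
noncomputable def kdmBilin (S : H →L[ℝ] H) : H →L[ℝ] H →L[ℝ] ℝ :=
  LinearMap.mkContinuous₂
    (LinearMap.mk₂ ℝ (fun u v => (inner ℝ (S u) v : ℝ))
      (fun a b c => by simp [inner_add_left])
      (fun r a c => by simp [real_inner_smul_left])
      (fun a b c => by simp [inner_add_right])
      (fun r a b => by simp [real_inner_smul_right]))
    ‖S‖ (fun x y => by
      calc ‖(inner ℝ (S x) y : ℝ)‖ ≤ ‖S x‖ * ‖y‖ := norm_inner_le_norm _ _
        _ ≤ ‖S‖ * ‖x‖ * ‖y‖ := by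
            gcongr; exact S.le_opNorm x)

@[simp] lemma kdmBilin_apply (S : H →L[ℝ] H) (u v : H) :
    kdmBilin S u v = (inner ℝ (S u) v : ℝ) := rfl

end Aux

/-- (Testable implication of the null hypothesis.)  In the KDM setup,
assume the kernel is universal, i.e. the functions `z ↦ ⟨φ z, h⟩`, `h ∈ H`, are dense in
`L²(P)`.  Then `g = p` P-a.e. if and only if `h_λ = 0` for every `λ > 0`, where `h_λ` is
the unique solution of `(T + λ id) h_λ = b`. -/
theorem kdm_null_hypothesis_iff
    {Z : Type*} [MeasurableSpace Z]
    (P Q : Measure Z) [IsProbabilityMeasure P] [IsProbabilityMeasure Q]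
    (hQP : Q ≪ P)
    (hg2 : Integrable (fun z => ((Q.rnDeriv P z).toReal) ^ 2) P)
    {H : Type*} [NormedAddCommGroup H] [InnerProductSpace ℝ H] [CompleteSpace H]
    [TopologicalSpace.SeparableSpace H]
    (φ : Z → H) (hφ : StronglyMeasurable φ)
    (κ : ℝ) (hκ : ∀ z, (inner ℝ (φ z) (φ z) : ℝ) ≤ κ)
    (p : Z → ℝ) (hp : Measurable p) (πB : ℝ) (hpB : ∀ z, |p z| ≤ πB)
    (T : H →L[ℝ] H) (hT : ∀ h : H, T h = ∫ z, (inner ℝ (φ z) h : ℝ) • φ z ∂P)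
    (b : H) (hb : b = (∫ z, φ z ∂Q) - ∫ z, p z • φ z ∂P)
    -- universality: the embedded functions are dense in L²(P)
    (huniv : ∀ f : Z → ℝ, MemLp f 2 P → ∀ δ : ℝ, 0 < δ →
      ∃ h : H, ∫ z, (f z - (inner ℝ (φ z) h : ℝ)) ^ 2 ∂P < δ) :
    (∀ᵐ z ∂P, (Q.rnDeriv P z).toReal = p z)
      ↔ (∀ lam : ℝ, 0 < lam → ∀ x : H, T x + lam • x = b → x = 0) := by
  classical
  set g : Z → ℝ := fun z => (Q.rnDeriv P z).toReal with hgdef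
  have hgm : Measurable g := (Measure.measurable_rnDeriv Q P).ennreal_toReal
  have hgint : Integrable g P := Measure.integrable_toReal_rnDeriv
  -- basic bounds on φ
  have hφb : ∀ z, ‖φ z‖ ≤ Real.sqrt κ := by
    intro z
    rw [← Real.sqrt_sq (norm_nonneg (φ z))]
    exact Real.sqrt_le_sqrt (by rw [← real_inner_self_eq_norm_sq]; exact hκ z)
  set k : H → Z → ℝ := fun x z => (inner ℝ (φ z) x : ℝ) with hkdef
  have hkm : ∀ x, StronglyMeasurable (k x) := fun x =>
    hφ.inner stronglyMeasurable_const
  have hkb : ∀ x z, |k x z| ≤ Real.sqrt κ * ‖x‖ := fun x z =>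
    le_trans (abs_real_inner_le_norm _ _) (by gcongr; exact hφb z)
  have hφintP : Integrable φ P :=
    (integrable_const (Real.sqrt κ)).mono' hφ.aestronglyMeasurable
      (Filter.Eventually.of_forall hφb)
  have hφintQ : Integrable φ Q :=
    (integrable_const (Real.sqrt κ)).mono' hφ.aestronglyMeasurable
      (Filter.Eventually.of_forall hφb)
  have hkint : ∀ x, Integrable (k x) P := fun x =>
    (integrable_const (Real.sqrt κ * ‖x‖)).mono' (hkm x).aestronglyMeasurable
      (Filter.Eventually.of_forall fun z => by
        simpa [Real.norm_eq_abs] using hkb x z)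
  -- the inner products with T
  have hTinner : ∀ x y : H, (inner ℝ x (T y) : ℝ) = ∫ z, k y z * k x z ∂P := by
    intro x y
    have hint : Integrable (fun z => (inner ℝ (φ z) y : ℝ) • φ z) P :=
      (integrable_const (Real.sqrt κ * ‖y‖ * Real.sqrt κ)).mono'
        ((hkm y).smul hφ).aestronglyMeasurable
        (Filter.Eventually.of_forall fun z => by
          rw [norm_smul]
          exact mul_le_mul (by simpa [Real.norm_eq_abs] using hkb y z) (hφb z)
            (norm_nonneg _) (by positivity))
    rw [hT y, ← integral_inner hint x]
    refine integral_congr_ae (Filter.Eventually.of_forall fun z => ?_)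
    simp [hkdef, real_inner_smul_right, real_inner_comm]
  have hTpos : ∀ x : H, 0 ≤ (inner ℝ x (T x) : ℝ) := by
    intro x
    rw [hTinner x x]
    exact integral_nonneg fun z => mul_self_nonneg _
  -- inner products with b
  have hgk : ∀ x, Integrable (fun z => g z * k x z) P := fun x =>
    Integrable.bdd_mul (c := Real.sqrt κ * ‖x‖) hgint (hkm x).aestronglyMeasurable
      (Filter.Eventually.of_forall fun z => by
        simpa [Real.norm_eq_abs] using hkb x z) |>.congr
      (Filter.Eventually.of_forall fun z => mul_comm _ _)
  have hpk : ∀ x, Integrable (fun z => p z * k x z) P := fun x =>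
    ((hkint x).bdd_mul (c := πB) hp.aestronglyMeasurable
      (Filter.Eventually.of_forall fun z => by
        simpa [Real.norm_eq_abs] using hpB z))
  have hbinner : ∀ x : H, (inner ℝ x b : ℝ) = ∫ z, (g z - p z) * k x z ∂P := by
    intro x
    have h1 : (inner ℝ x (∫ z, φ z ∂Q) : ℝ) = ∫ z, g z * k x z ∂P := by
      rw [← integral_inner hφintQ x]
      rw [← MeasureTheory.integral_rnDeriv_smul hQP (f := fun z => (inner ℝ x (φ z) : ℝ))]
      refine integral_congr_ae (Filter.Eventually.of_forall fun z => ?_)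
      simp [hkdef, smul_eq_mul, hgdef, real_inner_comm]
    have hppmi : Integrable (fun z => p z • φ z) P :=
      (integrable_const (πB * Real.sqrt κ)).mono'
        ((hp.stronglyMeasurable.smul hφ).aestronglyMeasurable)
        (Filter.Eventually.of_forall fun z => by
          rw [norm_smul]
          exact mul_le_mul (by simpa [Real.norm_eq_abs] using hpB z) (hφb z)
            (norm_nonneg _) ((abs_nonneg _).trans (hpB z)))
    have h2 : (inner ℝ x (∫ z, p z • φ z ∂P) : ℝ) = ∫ z, p z * k x z ∂P := by
      rw [← integral_inner hppmi x]
      refine integral_congr_ae (Filter.Eventually.of_forall fun z => ?_)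
      simp [hkdef, real_inner_smul_right, real_inner_comm]
    rw [hb, inner_sub_right, h1, h2, ← integral_sub (hgk x) (hpk x)]
    refine integral_congr_ae (Filter.Eventually.of_forall fun z => ?_)
    ring
  constructor
  · -- forward direction
    intro hnull lam hlam x hx
    have hb0 : b = 0 := by
      have : (∫ z, φ z ∂Q) = ∫ z, p z • φ z ∂P := by
        rw [← MeasureTheory.integral_rnDeriv_smul hQP (f := φ)]
        refine integral_congr_ae ?_
        filter_upwards [hnull] with z hz
        rw [hz]
      rw [hb, this, sub_self]
    rw [hb0] at hx
    have h0 : (inner ℝ x (T x) : ℝ) + lam * ‖x‖ ^ 2 = 0 := by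
      have := congrArg (fun y => (inner ℝ x y : ℝ)) hx
      simpa [inner_add_right, real_inner_smul_right, real_inner_self_eq_norm_sq] using this
    have hx2 : ‖x‖ ^ 2 = 0 := by nlinarith [hTpos x, sq_nonneg ‖x‖]
    exact norm_eq_zero.mp (sq_eq_zero_iff.mp hx2)
  · -- backward direction
    intro hsol
    -- First: b = 0, using the Lax-Milgram theorem to produce a solution.
    have hb0 : b = 0 := by
      set S : H →L[ℝ] H := T + (1 : ℝ) • ContinuousLinearMap.id ℝ H with hS
      have hSapp : ∀ u : H, S u = T u + (1 : ℝ) • u := fun u => by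
        simp [hS]
      have hco : IsCoercive (kdmBilin S) := by
        refine ⟨1, one_pos, fun u => ?_⟩
        have : (inner ℝ (S u) u : ℝ) = (inner ℝ u (T u) : ℝ) + ‖u‖ ^ 2 := by
          rw [hSapp, inner_add_left, real_inner_comm (T u) u,
            real_inner_smul_left, real_inner_self_eq_norm_sq]
          ring
        rw [kdmBilin_apply, this]
        nlinarith [hTpos u, sq_nonneg ‖u‖]
      set x : H := hco.continuousLinearEquivOfBilin.symm b with hxdef
      have hSx : S x = b := by
        apply ext_inner_right ℝ
        intro w
        have h1 : (inner ℝ (hco.continuousLinearEquivOfBilin x) w : ℝ) = kdmBilin S x w :=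
          hco.continuousLinearEquivOfBilin_apply x w
        rw [kdmBilin_apply] at h1
        rw [← h1, hxdef, hco.continuousLinearEquivOfBilin.apply_symm_apply]
      have hx0 : x = 0 := hsol 1 one_pos x (by rw [← hSapp]; exact hSx)
      rw [← hSx, hx0, map_zero]
    -- Hence all embedded test statistics vanish.
    have hzero : ∀ x : H, ∫ z, (g z - p z) * k x z ∂P = 0 := by
      intro x
      rw [← hbinner x, hb0, inner_zero_right]
    -- Now use universality.
    set f : Z → ℝ := fun z => g z - p z with hfdef
    have hfm : AEStronglyMeasurable f P := ((hgm.sub hp).stronglyMeasurable).aestronglyMeasurable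
    have hgL2 : MemLp g 2 P :=
      (memLp_two_iff_integrable_sq hgm.stronglyMeasurable.aestronglyMeasurable).mpr hg2
    have hpL2 : MemLp p 2 P :=
      MemLp.of_bound hp.stronglyMeasurable.aestronglyMeasurable πB
        (Filter.Eventually.of_forall fun z => by simpa [Real.norm_eq_abs] using hpB z)
    have hfL2 : MemLp f 2 P := hgL2.sub hpL2
    have hf2int : Integrable (fun z => f z ^ 2) P := hfL2.integrable_sq
    set A : ℝ := ∫ z, f z ^ 2 ∂P with hAdef
    have hA0 : 0 ≤ A := integral_nonneg fun z => sq_nonneg _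
    have hAle : ∀ δ : ℝ, 0 < δ → A ≤ δ := by
      intro δ hδ
      obtain ⟨h, hh⟩ := huniv f hfL2 δ hδ
      have hkL2 : MemLp (k h) 2 P :=
        MemLp.of_bound (hkm h).aestronglyMeasurable (Real.sqrt κ * ‖h‖)
          (Filter.Eventually.of_forall fun z => by
            simpa [Real.norm_eq_abs] using hkb h z)
      have hfk : Integrable (fun z => f z * k h z) P := by
        refine ((hgk h).sub (hpk h)).congr (Filter.Eventually.of_forall fun z => ?_)
        simp only [hfdef, Pi.sub_apply]
        ring
      have hfk0 : ∫ z, f z * k h z ∂P = 0 := hzero h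
      have hdiff2 : Integrable (fun z => (f z - k h z) ^ 2) P := (hfL2.sub hkL2).integrable_sq
      have hcross : Integrable (fun z => f z * (f z - k h z)) P := by
        refine (hf2int.sub hfk).congr (Filter.Eventually.of_forall fun z => ?_)
        simp only [Pi.sub_apply]
        ring
      have hsplit : A = (∫ z, f z * k h z ∂P) + ∫ z, f z * (f z - k h z) ∂P := by
        rw [← integral_add hfk hcross]
        refine integral_congr_ae (Filter.Eventually.of_forall fun z => ?_)
        simp only [Pi.add_apply]
        ring
      have hmono : ∫ z, f z * (f z - k h z) ∂P ≤ ∫ z, (f z ^ 2 + (f z - k h z) ^ 2) / 2 ∂P := by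
        refine integral_mono hcross ((hf2int.add hdiff2).div_const 2) fun z => ?_
        simp only [Pi.add_apply]
        nlinarith [sq_nonneg (k h z)]
      have hval : ∫ z, (f z ^ 2 + (f z - k h z) ^ 2) / 2 ∂P
          = A / 2 + (∫ z, (f z - k h z) ^ 2 ∂P) / 2 := by
        rw [integral_div, integral_add hf2int hdiff2, add_div]
      have hAA : A ≤ A / 2 + δ / 2 := by
        rw [hval] at hmono
        rw [hsplit, hfk0, zero_add]
        linarith [hh]
      linarith
    have hAzero : A = 0 := le_antisymm (le_of_forall_pos_le_add (by
      intro ε hε; simpa using hAle ε hε)) hA0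
    have hsq0 : (fun z => f z ^ 2) =ᵐ[P] 0 :=
      (integral_eq_zero_iff_of_nonneg (fun z => sq_nonneg (f z)) hf2int).mp hAzero
    filter_upwards [hsq0] with z hz
    have hz0 : f z = 0 := by
      have : f z ^ 2 = 0 := by simpa using hz
      exact sq_eq_zero_iff.mp this
    simpa [hfdef, sub_eq_zero] using hz0
end

section
/- Let X and Y be measurable spaces, μ a σ-finite measure on X, ν a σ-finite measure on Y, and ρ a probability measure on the product X × Y that is absolutely continuous with respect to the product measure μ ⊗ ν. Then ρ is absolutely continuous with respect to the product of its own marginals: ρ ≪ ρ_X ⊗ ρ_Y, where ρ_X and ρ_Y denote the pushforwards of ρ under the first and second coordinate projections. -/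
open MeasureTheory
open scoped ENNReal

/-- If a probability measure `ρ` on `X × Y` is absolutely continuous
with respect to a product `μ ⊗ ν` of σ-finite measures, then `ρ` is absolutely continuous
with respect to the product of its own marginals. -/
theorem absolutelyContinuous_prod_marginals
    {X Y : Type*} [MeasurableSpace X] [MeasurableSpace Y]
    (μ : Measure X) (ν : Measure Y) [SigmaFinite μ] [SigmaFinite ν]
    (ρ : Measure (X × Y)) [IsProbabilityMeasure ρ]
    (hρ : ρ ≪ μ.prod ν) :
    ρ ≪ (ρ.map Prod.fst).prod (ρ.map Prod.snd) := by
  haveI : IsProbabilityMeasure (ρ.map Prod.fst) :=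
    Measure.isProbabilityMeasure_map measurable_fst.aemeasurable
  haveI : IsProbabilityMeasure (ρ.map Prod.snd) :=
    Measure.isProbabilityMeasure_map measurable_snd.aemeasurable
  set f : X × Y → ℝ≥0∞ := ρ.rnDeriv (μ.prod ν) with hf_def
  have hf : Measurable f := Measure.measurable_rnDeriv _ _
  have hρ_eq : (μ.prod ν).withDensity f = ρ := Measure.withDensity_rnDeriv_eq ρ (μ.prod ν) hρ
  set F : X → ℝ≥0∞ := fun x => ∫⁻ y, f (x, y) ∂ν with hF_def
  have hF : Measurable F := hf.lintegral_prod_right'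
  set G : Y → ℝ≥0∞ := fun y => ∫⁻ x, f (x, y) ∂μ with hG_def
  have hG : Measurable G := hf.lintegral_prod_left'
  -- marginal computations
  have hmapfst : ∀ s : Set X, MeasurableSet s →
      ρ.map Prod.fst s = ∫⁻ x in s, F x ∂μ := by
    intro s hs
    rw [Measure.map_apply measurable_fst hs, ← hρ_eq,
      withDensity_apply _ (measurable_fst hs)]
    have h1 : Prod.fst ⁻¹' s = s ×ˢ (Set.univ : Set Y) := by ext z; simp
    rw [h1, ← Measure.prod_restrict, Measure.restrict_univ,
      lintegral_prod _ hf.aemeasurable]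
  have hmapsnd : ∀ t : Set Y, MeasurableSet t →
      ρ.map Prod.snd t = ∫⁻ y in t, G y ∂ν := by
    intro t ht
    rw [Measure.map_apply measurable_snd ht, ← hρ_eq,
      withDensity_apply _ (measurable_snd ht)]
    have h1 : Prod.snd ⁻¹' t = (Set.univ : Set X) ×ˢ t := by ext z; simp
    rw [h1, ← Measure.prod_restrict, Measure.restrict_univ,
      lintegral_prod_symm _ hf.aemeasurable]
  -- the product of marginals as a density over μ ⊗ ν
  have key : (ρ.map Prod.fst).prod (ρ.map Prod.snd)
      = (μ.prod ν).withDensity (fun z => F z.1 * G z.2) := by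
    refine Measure.prod_eq fun s t hs ht => ?_
    rw [withDensity_apply _ (hs.prod ht), ← Measure.prod_restrict,
      lintegral_prod_mul hF.aemeasurable hG.aemeasurable,
      hmapfst s hs, hmapsnd t ht]
  refine Measure.AbsolutelyContinuous.mk fun s hs h0 => ?_
  rw [key, withDensity_apply _ hs] at h0
  have hzero : ∀ᵐ z ∂(μ.prod ν), z ∈ s → F z.1 * G z.2 = 0 := by
    rw [← ae_restrict_iff' hs]
    exact (lintegral_eq_zero_iff ((hF.comp measurable_fst).mul
      (hG.comp measurable_snd))).mp h0
  set A : Set X := F ⁻¹' {0} with hA_def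
  set B : Set Y := G ⁻¹' {0} with hB_def
  have hAm : MeasurableSet A := hF (measurableSet_singleton 0)
  have hBm : MeasurableSet B := hG (measurableSet_singleton 0)
  set C : Set (X × Y) := A ×ˢ (Set.univ : Set Y) ∪ (Set.univ : Set X) ×ˢ B with hC_def
  -- ρ of the strips is zero
  have hρA : ρ (A ×ˢ (Set.univ : Set Y)) = 0 := by
    rw [← hρ_eq, withDensity_apply _ (hAm.prod MeasurableSet.univ),
      ← Measure.prod_restrict, Measure.restrict_univ, lintegral_prod _ hf.aemeasurable]
    have : ∫⁻ x in A, F x ∂μ = ∫⁻ x in A, 0 ∂μ :=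
      setLIntegral_congr_fun hAm (fun x hx => hx)
    simpa using this
  have hρB : ρ ((Set.univ : Set X) ×ˢ B) = 0 := by
    rw [← hρ_eq, withDensity_apply _ (MeasurableSet.univ.prod hBm),
      ← Measure.prod_restrict, Measure.restrict_univ, lintegral_prod_symm _ hf.aemeasurable]
    have : ∫⁻ y in B, G y ∂ν = ∫⁻ y in B, 0 ∂ν :=
      setLIntegral_congr_fun hBm (fun y hy => hy)
    simpa using this
  have hρC : ρ C = 0 := by
    refine le_antisymm ?_ zero_le
    calc ρ C ≤ ρ (A ×ˢ (Set.univ : Set Y)) + ρ ((Set.univ : Set X) ×ˢ B) :=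
      measure_union_le _ _
    _ = 0 := by rw [hρA, hρB, add_zero]
  -- the rest of s is μ ⊗ ν-null
  have hsub : ∀ᵐ z ∂(μ.prod ν), z ∈ s → z ∈ C := by
    filter_upwards [hzero] with z hz hzs
    rcases mul_eq_zero.mp (hz hzs) with h | h
    · exact Or.inl ⟨h, Set.mem_univ _⟩
    · exact Or.inr ⟨Set.mem_univ _, h⟩
  have hnull : (μ.prod ν) (s \ C) = 0 := by
    have : s \ C ⊆ {z | ¬ (z ∈ s → z ∈ C)} := fun z hz h => hz.2 (h hz.1)
    exact measure_mono_null this hsub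
  have hρnull : ρ (s \ C) = 0 := hρ hnull
  refine le_antisymm ?_ zero_le
  calc ρ s ≤ ρ (s ∩ C) + ρ (s \ C) := measure_le_inter_add_diff ρ s C
    _ ≤ ρ C + 0 := by rw [hρnull]; exact add_le_add_left (measure_mono Set.inter_subset_right) 0
    _ = 0 := by rw [hρC, add_zero]
end
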